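/- arXiv:2012.14528 — 5 statements merged into one kernel-verified Lean document; each statement's English description precedes it below -/
import Mathlib

section
/- For every integer k ≥ 3 and every integer n ≥ k³, the family of all k-element subsets of [n] cannot be written as the union of n − 2k + 2 intersecting families of k-element subsets of [n], each of which is non-trivial (covering number at least 2). -/
/-!
If a set `T` is not a cover of an intersecting family `F`, some member `A` misses `T`, and every
member containing `T` also contains `T ∪ {w}` for some `w ∈ A`. Iterating, at most
`k ^ j * C(n - |T| - j, k - |T| - j)` members contain `T`, as long as no superset of `T` of size
`< |T| + j` inside a member is a cover. Without a 2-cover this bounds `|F|` by `k³ C(n-3, k-3)`.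
Given a 2-cover `{x, y}`, split at a point `a`: at most `k C(n-2, k-2)` members contain `a`, and at
most `C(n-2, k-2)` miss it, for `a = y` if `y` lies in a second 2-cover `{y, z}` (those members
contain `x` and `z`), and for `a = x` otherwise (those members contain `y` and branch twice).
So for `n ≥ k³` each family has at most `(k+1) C(n-2, k-2)` members, and `n - 2k + 2` of them
fall short of `C(n, k)`.
-/

open Finset

namespace Nat

lemma mul_choose_le_choose_add_one {c m r : ℕ} (h : c * (r + 1) ≤ m + 1) :
    c * m.choose r ≤ (m + 1).choose (r + 1) := by
  refine Nat.le_of_mul_le_mul_right ?_ (Nat.succ_pos m)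
  calc c * m.choose r * (m + 1) = c * (r + 1) * (m + 1).choose (r + 1) := by
        rw [mul_assoc, mul_comm _ (m + 1), add_one_mul_choose_eq]; ring
    _ ≤ (m + 1) * (m + 1).choose (r + 1) := Nat.mul_le_mul_right _ h
    _ = (m + 1).choose (r + 1) * (m + 1) := mul_comm _ _

lemma add_two_mul_add_one_mul_choose_eq (m r : ℕ) :
    (m + 2) * (m + 1) * m.choose r = (m + 2).choose (r + 2) * ((r + 2) * (r + 1)) := by
  rw [mul_assoc, add_one_mul_choose_eq, ← mul_assoc, add_one_mul_choose_eq]; ring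

end Nat

lemma sq_mul_choose_le_choose {k N : ℕ} (hk : 3 ≤ k) (hN : k ^ 3 ≤ N) :
    k ^ 2 * (N - 3).choose (k - 3) ≤ (N - 2).choose (k - 2) := by
  obtain ⟨r, rfl⟩ : ∃ r, k = r + 3 := ⟨k - 3, by omega⟩
  have h : (r + 3) ^ 2 * (r + 1) + 3 ≤ N := by nlinarith
  obtain ⟨m, rfl⟩ : ∃ m, N = m + 3 := ⟨N - 3, by omega⟩
  simpa using Nat.mul_choose_le_choose_add_one (c := (r + 3) ^ 2) (m := m) (r := r) (by omega)

lemma mul_choose_lt_choose {k N : ℕ} (hk : 3 ≤ k) (hN : k ^ 3 ≤ N) :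
    (N - 2 * k + 2) * ((k + 1) * (N - 2).choose (k - 2)) < N.choose k := by
  obtain ⟨r, rfl⟩ : ∃ r, k = r + 2 := ⟨k - 2, by omega⟩
  have h : (r + 3) * ((r + 2) * (r + 1)) + r + 2 ≤ N := by nlinarith
  obtain ⟨m, rfl⟩ : ∃ m, N = m + 2 := ⟨N - 2, by omega⟩
  have hpos : 0 < m.choose r := Nat.choose_pos (by omega)
  refine Nat.lt_of_mul_lt_mul_right (a := (r + 2) * (r + 1)) ?_
  rw [← Nat.add_two_mul_add_one_mul_choose_eq]
  calc (m + 2 - 2 * (r + 2) + 2) * ((r + 2 + 1) * (m + 2 - 2).choose (r + 2 - 2))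
        * ((r + 2) * (r + 1))
      = (m + 2 - 2 * (r + 2) + 2) * ((r + 3) * ((r + 2) * (r + 1))) * m.choose r := by
        simp only [Nat.add_sub_cancel]; ring
    _ < (m + 1) * (m + 2) * m.choose r :=
        Nat.mul_lt_mul_of_pos_right (Nat.mul_lt_mul_of_le_of_lt (by omega) (by omega) (by omega)) hpos
    _ = (m + 2) * (m + 1) * m.choose r := by ring

variable {α : Type*} [DecidableEq α] {k : ℕ}

lemma card_filter_superset_le_choose [Fintype α] {G : Finset (Finset α)} (hG : ∀ B ∈ G, #B = k)
    (T : Finset α) :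
    #{B ∈ G | T ⊆ B} ≤ (Fintype.card α - #T).choose (k - #T) := by
  rw [← card_compl, ← card_powersetCard]
  refine card_le_card_of_injOn (· \ T) (fun B hB => ?_) (fun B₁ hB₁ B₂ hB₂ h => ?_)
  · obtain ⟨hBG, hTB⟩ := mem_filter.1 hB
    rw [mem_coe, mem_powersetCard, card_sdiff_of_subset hTB, hG B hBG]
    exact ⟨fun x hx => mem_compl.2 (mem_sdiff.1 hx).2, rfl⟩
  · rw [← sdiff_union_of_subset (mem_filter.1 hB₁).2, ← sdiff_union_of_subset (mem_filter.1 hB₂).2]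
    exact congrArg (· ∪ T) h

lemma card_filter_superset_le_sum {G F : Finset (Finset α)}
    (hGF : ∀ B ∈ G, ∀ A ∈ F, (B ∩ A).Nonempty) {A T : Finset α} (hA : A ∈ F) :
    #{B ∈ G | T ⊆ B} ≤ ∑ w ∈ A, #{B ∈ G | insert w T ⊆ B} := by
  refine (card_le_card fun B hB => ?_).trans card_biUnion_le
  obtain ⟨hBG, hTB⟩ := mem_filter.1 hB
  obtain ⟨w, hw⟩ := hGF B hBG A hA
  rw [mem_inter] at hw
  exact mem_biUnion.2 ⟨w, hw.2, mem_filter.2 ⟨hBG, insert_subset hw.1 hTB⟩⟩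

lemma card_filter_superset_le_pow_mul_choose [Fintype α] {G F : Finset (Finset α)}
    (hG : ∀ B ∈ G, #B = k) (hF : ∀ A ∈ F, #A ≤ k)
    (hGF : ∀ B ∈ G, ∀ A ∈ F, (B ∩ A).Nonempty) (j : ℕ) (T : Finset α)
    (hT : ∀ C, T ⊆ C → #C < #T + j → (∃ B ∈ G, C ⊆ B) → ∃ A ∈ F, Disjoint C A) :
    #{B ∈ G | T ⊆ B} ≤ k ^ j * (Fintype.card α - (#T + j)).choose (k - (#T + j)) := by
  induction j generalizing T with
  | zero => simpa using card_filter_superset_le_choose hG T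
  | succ j ih =>
    by_cases hTG : ∃ B ∈ G, T ⊆ B
    · obtain ⟨A, hAF, hTA⟩ := hT T subset_rfl (by omega) hTG
      calc #{B ∈ G | T ⊆ B} ≤ ∑ w ∈ A, #{B ∈ G | insert w T ⊆ B} :=
            card_filter_superset_le_sum hGF hAF
        _ ≤ ∑ w ∈ A, k ^ j * (Fintype.card α - (#T + (j + 1))).choose (k - (#T + (j + 1))) := by
            refine sum_le_sum fun w hw => ?_
            have hwT : #(insert w T) = #T + 1 := card_insert_of_notMem (disjoint_right.1 hTA hw)
            have := ih (insert w T) fun C hC hCcard => hT C ((subset_insert w T).trans hC) (by omega)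
            rwa [hwT, add_right_comm, add_assoc] at this
        _ ≤ k ^ (j + 1) * (Fintype.card α - (#T + (j + 1))).choose (k - (#T + (j + 1))) := by
            rw [sum_const, smul_eq_mul, pow_succ', mul_assoc]
            exact Nat.mul_le_mul_right _ (hF A hAF)
    · rw [filter_false_of_mem fun B hB hTB => hTG ⟨B, hB, hTB⟩, card_empty]
      exact Nat.zero_le _

lemma exists_disjoint_of_card_lt {F : Finset (Finset α)} {t : ℕ}
    (hτ : ∀ C : Finset α, (∀ A ∈ F, (C ∩ A).Nonempty) → t ≤ #C) {C : Finset α} (hC : #C < t) :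
    ∃ A ∈ F, Disjoint C A := by
  by_contra! h
  exact hC.not_ge (hτ C fun A hA => not_disjoint_iff_nonempty_inter.1 (h A hA))

lemma card_filter_mem_le [Fintype α] {F : Finset (Finset α)} (hF : ∀ A ∈ F, #A = k)
    (hint : ∀ A ∈ F, ∀ B ∈ F, (A ∩ B).Nonempty)
    (hτ : ∀ C : Finset α, (∀ A ∈ F, (C ∩ A).Nonempty) → 2 ≤ #C) (a : α) :
    #{B ∈ F | a ∈ B} ≤ k * (Fintype.card α - 2).choose (k - 2) := by
  simpa using card_filter_superset_le_pow_mul_choose hF (fun A hA => (hF A hA).le) hint 1 {a}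
    fun C _ hC _ => exists_disjoint_of_card_lt hτ (by simpa using hC)

lemma card_le_of_card_filter_not_mem_le [Fintype α] {F : Finset (Finset α)}
    (hF : ∀ A ∈ F, #A = k) (hint : ∀ A ∈ F, ∀ B ∈ F, (A ∩ B).Nonempty)
    (hτ : ∀ C : Finset α, (∀ A ∈ F, (C ∩ A).Nonempty) → 2 ≤ #C) {a : α}
    (ha : #{B ∈ F | a ∉ B} ≤ (Fintype.card α - 2).choose (k - 2)) :
    #F ≤ (k + 1) * (Fintype.card α - 2).choose (k - 2) :=
  calc #F = #{B ∈ F | a ∈ B} + #{B ∈ F | a ∉ B} := (card_filter_add_card_filter_not _).symm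
    _ ≤ k * (Fintype.card α - 2).choose (k - 2) + (Fintype.card α - 2).choose (k - 2) :=
        add_le_add (card_filter_mem_le hF hint hτ a) ha
    _ = (k + 1) * (Fintype.card α - 2).choose (k - 2) := by ring

lemma card_filter_not_mem_le_of_pair_covers [Fintype α] {F : Finset (Finset α)}
    (hF : ∀ A ∈ F, #A = k) {x y z : α} (hxz : x ≠ z)
    (hxy : ∀ A ∈ F, ({x, y} ∩ A).Nonempty) (hyz : ∀ A ∈ F, ({y, z} ∩ A).Nonempty) :
    #{B ∈ F | y ∉ B} ≤ (Fintype.card α - 2).choose (k - 2) :=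
  calc #{B ∈ F | y ∉ B} ≤ #{B ∈ F | {x, z} ⊆ B} := by
        refine card_le_card fun B hB => ?_
        obtain ⟨hBF, hyB⟩ := mem_filter.1 hB
        have hxB : x ∈ B := by simpa [Finset.Nonempty, hyB] using hxy B hBF
        have hzB : z ∈ B := by simpa [Finset.Nonempty, hyB] using hyz B hBF
        exact mem_filter.2 ⟨hBF, insert_subset hxB (singleton_subset_iff.2 hzB)⟩
    _ ≤ (Fintype.card α - 2).choose (k - 2) := by
        simpa [card_pair hxz] using card_filter_superset_le_choose hF {x, z}

lemma card_filter_not_mem_le_of_unique_partner [Fintype α] {F : Finset (Finset α)}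
    (hF : ∀ A ∈ F, #A = k) (hint : ∀ A ∈ F, ∀ B ∈ F, (A ∩ B).Nonempty)
    (hτ : ∀ C : Finset α, (∀ A ∈ F, (C ∩ A).Nonempty) → 2 ≤ #C) {x y : α}
    (hxy : ∀ A ∈ F, ({x, y} ∩ A).Nonempty)
    (hpartner : ∀ z, z ≠ x → z ≠ y → ∃ A ∈ F, Disjoint {y, z} A) :
    #{B ∈ F | x ∉ B} ≤ k ^ 2 * (Fintype.card α - 3).choose (k - 3) := by
  have hy : ∀ B ∈ {B ∈ F | x ∉ B}, {y} ⊆ B := fun B hB => by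
    obtain ⟨hBF, hxB⟩ := mem_filter.1 hB
    simpa [Finset.Nonempty, hxB] using hxy B hBF
  rw [← filter_true_of_mem hy]
  refine (card_filter_superset_le_pow_mul_choose (fun B hB => hF B (mem_filter.1 hB).1)
    (fun A hA => (hF A hA).le) (fun B hB => hint B (mem_filter.1 hB).1) 2 {y} ?_).trans (by simp)
  rintro C hyC hC3 ⟨B, hB, hCB⟩
  have hxC : x ∉ C := fun hx => (mem_filter.1 hB).2 (hCB hx)
  rcases Nat.lt_or_ge #C 2 with hC1 | hC2
  · exact exists_disjoint_of_card_lt hτ hC1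
  obtain ⟨a, b, hab, rfl⟩ := card_eq_two.1 (show #C = 2 by simp at hC3; omega)
  rw [singleton_subset_iff, mem_insert, mem_singleton] at hyC
  rcases hyC with rfl | rfl
  · exact hpartner b (by rintro rfl; simp at hxC) hab.symm
  · rw [pair_comm]; exact hpartner a (by rintro rfl; simp at hxC) hab

theorem card_le_of_two_le_covering [Fintype α] {F : Finset (Finset α)} (hk : 3 ≤ k)
    (hN : k ^ 3 ≤ Fintype.card α) (hF : ∀ A ∈ F, #A = k)
    (hint : ∀ A ∈ F, ∀ B ∈ F, (A ∩ B).Nonempty)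
    (hτ : ∀ C : Finset α, (∀ A ∈ F, (C ∩ A).Nonempty) → 2 ≤ #C) :
    #F ≤ (k + 1) * (Fintype.card α - 2).choose (k - 2) := by
  have hratio := sq_mul_choose_le_choose hk hN
  by_cases hτ3 : ∀ C : Finset α, #C ≤ 2 → ∃ A ∈ F, Disjoint C A
  · calc #F = #{B ∈ F | ∅ ⊆ B} := by simp
      _ ≤ k ^ 3 * (Fintype.card α - 3).choose (k - 3) := by
          simpa using card_filter_superset_le_pow_mul_choose hF (fun A hA => (hF A hA).le) hint 3 ∅
            fun C _ hC _ => hτ3 C (by simp at hC; omega)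
      _ ≤ k * (Fintype.card α - 2).choose (k - 2) := by
          rw [pow_succ', mul_assoc]; exact Nat.mul_le_mul_left k hratio
      _ ≤ (k + 1) * (Fintype.card α - 2).choose (k - 2) := Nat.mul_le_mul_right _ k.le_succ
  push Not at hτ3
  obtain ⟨C, hC2, hC⟩ := hτ3
  replace hC : ∀ A ∈ F, (C ∩ A).Nonempty := fun A hA => not_disjoint_iff_nonempty_inter.1 (hC A hA)
  obtain ⟨x, y, -, rfl⟩ := card_eq_two.1 (le_antisymm hC2 (hτ _ hC))
  by_cases hpartner : ∀ z, z ≠ x → z ≠ y → ∃ A ∈ F, Disjoint {y, z} A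
  · exact card_le_of_card_filter_not_mem_le hF hint hτ
      ((card_filter_not_mem_le_of_unique_partner hF hint hτ hC hpartner).trans hratio)
  · push Not at hpartner
    obtain ⟨z, hzx, -, hyz⟩ := hpartner
    replace hyz : ∀ A ∈ F, ({y, z} ∩ A).Nonempty :=
      fun A hA => not_disjoint_iff_nonempty_inter.1 (hyz A hA)
    exact card_le_of_card_filter_not_mem_le hF hint hτ
      (card_filter_not_mem_le_of_pair_covers hF hzx.symm hC hyz)

/-- For `k ≥ 3` and `n ≥ k³`, the family of all `k`-element subsets of `[n]` cannot be
written as the union of `n - 2k + 2` intersecting families, each with covering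
number at least `2` (non-trivial). -/
theorem no_cover_by_nontrivial_intersecting_families_of_cube_le
    (k n : ℕ) (hk : 3 ≤ k) (hn : k ^ 3 ≤ n) :
    ¬ ∃ F : Fin (n - 2 * k + 2) → Finset (Finset (Fin n)),
      (∀ i, ∀ A ∈ F i, ∀ B ∈ F i, (A ∩ B).Nonempty) ∧
      (∀ i, ∀ C : Finset (Fin n), (∀ A ∈ F i, (C ∩ A).Nonempty) → 2 ≤ C.card) ∧
      Finset.univ.biUnion F = Finset.powersetCard k Finset.univ := by
  rintro ⟨F, hint, hτ, hcover⟩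
  have hF : ∀ i, ∀ B ∈ F i, #B = k := fun i B hB =>
    (mem_powersetCard.1 (hcover ▸ mem_biUnion.2 ⟨i, mem_univ i, hB⟩)).2
  have hbound : ∀ i ∈ univ, #(F i) ≤ (k + 1) * (n - 2).choose (k - 2) := fun i _ => by
    simpa using card_le_of_two_le_covering hk (by simpa using hn) (hF i) (hint i) (hτ i)
  have hcard : n.choose k ≤ (n - 2 * k + 2) * ((k + 1) * (n - 2).choose (k - 2)) :=
    calc n.choose k = #(univ.biUnion F) := by simp [hcover]
      _ ≤ (n - 2 * k + 2) * ((k + 1) * (n - 2).choose (k - 2)) := by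
          simpa using card_biUnion_le_card_mul univ F _ hbound
  exact (mul_choose_lt_choose hk hn).not_ge hcard
end

section
/- For every integer k ≥ 3, setting n = 2(k−1)², there exist (2k−4)(k−1) = n − 2k + 2 intersecting families of k-element subsets of [n], none of which is trivial, whose union is the family of all k-element subsets of [n]. -/
open Finset

namespace NIC

abbrev N (m : ℕ) : ℕ := 2 * (m + 2) ^ 2
abbrev Rw (m : ℕ) : ℕ := 2 * m + 4

lemma N_eq (m : ℕ) : N m = (m + 2) * Rw m := by ring

lemma Rw_pos (m : ℕ) : 0 < Rw m := by show 0 < 2*m+4; omega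

def col (m : ℕ) (x : Fin (N m)) : ℕ := x.val / Rw m
def row (m : ℕ) (x : Fin (N m)) : ℕ := x.val % Rw m

lemma col_lt (m : ℕ) (x : Fin (N m)) : col m x < m + 2 := by
  have hx : x.val < (m + 2) * Rw m := N_eq m ▸ x.isLt
  exact (Nat.div_lt_iff_lt_mul (Rw_pos m)).2 hx

lemma row_lt (m : ℕ) (x : Fin (N m)) : row m x < Rw m := Nat.mod_lt _ (Rw_pos m)

lemma cell_eq (m : ℕ) (x y : Fin (N m)) (h1 : col m x = col m y) (h2 : row m x = row m y) :
    x = y := by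
  simp only [col] at h1
  simp only [row] at h2
  apply Fin.ext
  rw [← Nat.div_add_mod x.val (Rw m), ← Nat.div_add_mod y.val (Rw m), h1, h2]

/-- the point at column `c`, row `r` (with mod-clamping so it is always defined). -/
def mk (m c r : ℕ) : Fin (N m) :=
  ⟨(c % (m + 2)) * Rw m + r % Rw m, by
    have h1 : c % (m + 2) + 1 ≤ m + 2 := Nat.mod_lt _ (by omega)
    have h2 : r % Rw m < Rw m := Nat.mod_lt _ (Rw_pos m)
    have h3 : (c % (m + 2) + 1) * Rw m ≤ (m + 2) * Rw m := Nat.mul_le_mul_right _ h1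
    have h4 : (c % (m + 2) + 1) * Rw m = (c % (m + 2)) * Rw m + Rw m := by ring
    rw [N_eq]
    linarith⟩

lemma col_mk (m : ℕ) {c r : ℕ} (hc : c < m + 2) (hr : r < Rw m) : col m (mk m c r) = c := by
  show ((c % (m + 2)) * Rw m + r % Rw m) / Rw m = c
  rw [Nat.mod_eq_of_lt hc, Nat.mod_eq_of_lt hr, add_comm,
    Nat.add_mul_div_right _ _ (Rw_pos m), Nat.div_eq_of_lt hr, Nat.zero_add]

lemma row_mk (m : ℕ) {c r : ℕ} (hc : c < m + 2) (hr : r < Rw m) : row m (mk m c r) = r := by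
  show ((c % (m + 2)) * Rw m + r % Rw m) % Rw m = r
  rw [Nat.mod_eq_of_lt hc, Nat.mod_eq_of_lt hr, add_comm, Nat.add_mul_mod_self_right,
    Nat.mod_eq_of_lt hr]

lemma mk_col_row (m : ℕ) (x : Fin (N m)) : mk m (col m x) (row m x) = x := by
  apply Fin.ext
  show (col m x % (m + 2)) * Rw m + row m x % Rw m = x.val
  rw [Nat.mod_eq_of_lt (col_lt m x), Nat.mod_eq_of_lt (row_lt m x)]
  show (x.val / Rw m) * Rw m + x.val % Rw m = x.val
  rw [mul_comm]
  exact Nat.div_add_mod x.val (Rw m)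

end NIC

namespace NIC

open Finset

/-- the three special cells of column `c`. -/
def Sc (m c : ℕ) : Finset (Fin (N m)) := {mk m c 0, mk m c 1, mk m c 2}

lemma mem_Sc (m : ℕ) {c : ℕ} (hc : c < m + 2) (x : Fin (N m)) :
    x ∈ Sc m c ↔ col m x = c ∧ row m x < 3 := by
  constructor
  · intro hx
    simp only [Sc, mem_insert, mem_singleton] at hx
    rcases hx with h | h | h <;> subst h <;>
      refine ⟨col_mk m hc (by show _ < 2*m+4; omega), ?_⟩ <;>
      · rw [row_mk m hc (by show _ < 2*m+4; omega)]; omega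
  · rintro ⟨h1, h2⟩
    have hx : x = mk m c (row m x) := by
      rw [← h1]; exact (mk_col_row m x).symm
    have : row m x = 0 ∨ row m x = 1 ∨ row m x = 2 := by omega
    simp only [Sc, mem_insert, mem_singleton]
    rcases this with h | h | h <;> rw [hx, h] <;> tauto

lemma card_Sc (m : ℕ) {c : ℕ} (hc : c < m + 2) : (Sc m c).card = 3 := by
  have h01 : mk m c 0 ≠ mk m c 1 := fun h => by
    have := congrArg (row m) h
    rw [row_mk m hc (by show _ < 2*m+4; omega), row_mk m hc (by show _ < 2*m+4; omega)] at this
    omega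
  have h02 : mk m c 0 ≠ mk m c 2 := fun h => by
    have := congrArg (row m) h
    rw [row_mk m hc (by show _ < 2*m+4; omega), row_mk m hc (by show _ < 2*m+4; omega)] at this
    omega
  have h12 : mk m c 1 ≠ mk m c 2 := fun h => by
    have := congrArg (row m) h
    rw [row_mk m hc (by show _ < 2*m+4; omega), row_mk m hc (by show _ < 2*m+4; omega)] at this
    omega
  rw [Sc, card_insert_of_notMem (by simp [h01, h02]),
    card_insert_of_notMem (by simp [h12]), card_singleton]

/-- row of the `t`-th window cell after normal-row-index `i`. -/
def wrow (m i t : ℕ) : ℕ := 3 + (i + 1 + t) % (2 * m + 1)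

lemma wrow_lt (m i t : ℕ) : wrow m i t < Rw m := by
  have : (i + 1 + t) % (2 * m + 1) < 2 * m + 1 := Nat.mod_lt _ (by omega)
  show 3 + _ < 2*m+4
  omega

lemma mod_add_cancel {M a t1 t2 : ℕ} (h1 : t1 < M) (h2 : t2 < M)
    (h : (a + t1) % M = (a + t2) % M) : t1 = t2 := by
  have h' : a + t1 ≡ a + t2 [MOD M] := h
  have h'' : t1 ≡ t2 [MOD M] := (Nat.ModEq.refl a).add_left_cancel h'
  have := h''
  unfold Nat.ModEq at this
  rw [Nat.mod_eq_of_lt h1, Nat.mod_eq_of_lt h2] at this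
  exact this

/-- window cells of column `c` following normal row index `i`. -/
def Wc (m c i : ℕ) : Finset (Fin (N m)) :=
  (Finset.range m).image fun t => mk m c (wrow m i t)

lemma mem_Wc (m : ℕ) {c : ℕ} (i : ℕ) (x : Fin (N m)) :
    x ∈ Wc m c i ↔ ∃ t < m, x = mk m c (wrow m i t) := by
  simp only [Wc, mem_image, mem_range]
  constructor
  · rintro ⟨t, ht, h⟩; exact ⟨t, ht, h.symm⟩
  · rintro ⟨t, ht, h⟩; exact ⟨t, ht, h.symm⟩

lemma card_Wc (m : ℕ) {c : ℕ} (hc : c < m + 2) (i : ℕ) : (Wc m c i).card = m := by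
  rw [Wc, card_image_of_injOn, card_range]
  intro t1 h1 t2 h2 h
  simp only [coe_range, Set.mem_Iio] at h1 h2
  have := congrArg (row m) h
  rw [row_mk m hc (wrow_lt m i t1), row_mk m hc (wrow_lt m i t2)] at this
  have hmod : (i + 1 + t1) % (2 * m + 1) = (i + 1 + t2) % (2 * m + 1) := by
    unfold wrow at this; omega
  exact mod_add_cancel (M := 2*m+1) (a := i+1) (by omega) (by omega) hmod

/-- the extra set of the family `(c, i)`: specials plus window. -/
def Bc (m c i : ℕ) : Finset (Fin (N m)) := Sc m c ∪ Wc m c i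

lemma disj_Sc_Wc (m : ℕ) {c : ℕ} (hc : c < m + 2) (i : ℕ) : Disjoint (Sc m c) (Wc m c i) := by
  rw [disjoint_left]
  intro x hS hW
  rw [mem_Sc m hc] at hS
  rw [mem_Wc m i] at hW
  obtain ⟨t, ht, rfl⟩ := hW
  have := row_mk m hc (wrow_lt m i t)
  have h3 : 3 ≤ wrow m i t := Nat.le_add_right _ _
  omega

lemma card_Bc (m : ℕ) {c : ℕ} (hc : c < m + 2) (i : ℕ) : (Bc m c i).card = m + 3 := by
  rw [Bc, card_union_of_disjoint (disj_Sc_Wc m hc i), card_Sc m hc, card_Wc m hc i]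
  omega

lemma Sc_subset_Bc (m c i : ℕ) : Sc m c ⊆ Bc m c i := subset_union_left

/-- cyclic window cover: any two distinct normal row indices see each other. -/
lemma window_cover (m : ℕ) {a b : ℕ} (ha : a < 2*m+1) (hb : b < 2*m+1) (hne : a ≠ b) :
    (∃ t < m, (a + 1 + t) % (2*m+1) = b) ∨ (∃ t < m, (b + 1 + t) % (2*m+1) = a) := by
  rcases Nat.lt_or_ge a b with hab | hab
  · set d := b - a with hd
    rcases le_or_gt d m with hdm | hdm
    · left
      refine ⟨d - 1, by omega, ?_⟩
      have : a + 1 + (d - 1) = b := by omega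
      rw [this, Nat.mod_eq_of_lt hb]
    · right
      refine ⟨2*m - d, by omega, ?_⟩
      have : b + 1 + (2*m - d) = a + (2*m+1) := by omega
      rw [this, Nat.add_mod_right, Nat.mod_eq_of_lt ha]
  · have hab' : b < a := by omega
    set d := a - b with hd
    rcases le_or_gt d m with hdm | hdm
    · right
      refine ⟨d - 1, by omega, ?_⟩
      have : b + 1 + (d - 1) = a := by omega
      rw [this, Nat.mod_eq_of_lt ha]
    · left
      refine ⟨2*m - d, by omega, ?_⟩
      have : a + 1 + (2*m - d) = b + (2*m+1) := by omega
      rw [this, Nat.add_mod_right, Nat.mod_eq_of_lt hb]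

end NIC

namespace NIC

open Finset

/-- the family indexed by column `c` and slot `s`. Slot `0` is the triangle family;
slot `s ≥ 1` is the Hilton–Milner style family at normal row `s + 2`. -/
def Fam (m c s : ℕ) : Finset (Finset (Fin (N m))) :=
  if s = 0 then
    (Finset.univ.powersetCard (m+3)).filter (fun A => 2 ≤ (A ∩ Sc m c).card)
  else
    (Finset.univ.powersetCard (m+3)).filter
      (fun A => A = Bc m c (s-1) ∨ (mk m c (s+2) ∈ A ∧ (A ∩ Bc m c (s-1)).Nonempty))

lemma Fam_subset (m c s : ℕ) : Fam m c s ⊆ Finset.univ.powersetCard (m+3) := by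
  unfold Fam
  split <;> exact filter_subset _ _

lemma Fam_intersecting (m : ℕ) {c : ℕ} (hc : c < m + 2) (s : ℕ) :
    ∀ A ∈ Fam m c s, ∀ B ∈ Fam m c s, (A ∩ B).Nonempty := by
  intro A hA B hB
  unfold Fam at hA hB
  by_cases hs : s = 0
  · rw [if_pos hs, mem_filter] at hA hB
    obtain ⟨-, hA2⟩ := hA
    obtain ⟨-, hB2⟩ := hB
    by_contra hcon
    rw [not_nonempty_iff_eq_empty] at hcon
    have hdisj : Disjoint A B := disjoint_iff_inter_eq_empty.2 hcon
    have hd : Disjoint (A ∩ Sc m c) (B ∩ Sc m c) :=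
      hdisj.mono inter_subset_left inter_subset_left
    have hcard := card_union_of_disjoint hd
    have hsub : (A ∩ Sc m c) ∪ (B ∩ Sc m c) ⊆ Sc m c :=
      union_subset inter_subset_right inter_subset_right
    have := card_le_card hsub
    rw [card_Sc m hc] at this
    omega
  · rw [if_neg hs, mem_filter] at hA hB
    obtain ⟨hA1, hA2⟩ := hA
    obtain ⟨hB1, hB2⟩ := hB
    have hBc : (Bc m c (s-1)).Nonempty := by
      rw [← card_pos, card_Bc m hc]; omega
    rcases hA2 with rfl | ⟨hAm, hAB⟩
    · rcases hB2 with rfl | ⟨hBm, hBB⟩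
      · rw [inter_self]; exact hBc
      · obtain ⟨z, hz⟩ := hBB
        rw [mem_inter] at hz
        exact ⟨z, mem_inter.2 ⟨hz.2, hz.1⟩⟩
    · rcases hB2 with rfl | ⟨hBm, hBB⟩
      · obtain ⟨z, hz⟩ := hAB
        exact ⟨z, hz⟩
      · exact ⟨mk m c (s+2), mem_inter.2 ⟨hAm, hBm⟩⟩

lemma extend_set (m : ℕ) (base : Finset (Fin (N m))) (x : Fin (N m))
    (hb : base.card ≤ m + 3) (hx : x ∉ base) :
    ∃ A : Finset (Fin (N m)), base ⊆ A ∧ x ∉ A ∧ A ∈ Finset.univ.powersetCard (m+3) := by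
  have hN : 2*(m*m) + 8*m + 8 = N m := by show _ = 2*(m+2)^2; ring
  have hcu : (Finset.univ.erase x).card = N m - 1 := by
    rw [card_erase_of_mem (mem_univ x), card_univ, Fintype.card_fin]
  have hsub : base ⊆ Finset.univ.erase x := by
    intro y hy
    exact mem_erase.2 ⟨fun h => hx (h ▸ hy), mem_univ y⟩
  obtain ⟨A, h1, h2, h3⟩ := exists_subsuperset_card_eq hsub hb (by omega)
  refine ⟨A, h1, fun hxA => ?_, mem_powersetCard.2 ⟨subset_univ A, h3⟩⟩
  exact (notMem_erase x Finset.univ) (h2 hxA)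

lemma Fam_nontrivial (m : ℕ) {c s : ℕ} (hc : c < m + 2) (hs : s < 2*m+2) :
    ∀ x : Fin (N m), ∃ A ∈ Fam m c s, x ∉ A := by
  intro x
  by_cases h0 : s = 0
  · -- triangle family: take the two (or three) special cells different from x and extend
    have hb : ((Sc m c).erase x).card ≤ m + 3 := by
      have := card_le_card (erase_subset x (Sc m c))
      rw [card_Sc m hc] at this
      omega
    obtain ⟨A, h1, h2, h3⟩ := extend_set m ((Sc m c).erase x) x hb (notMem_erase x _)
    refine ⟨A, ?_, h2⟩
    unfold Fam
    rw [if_pos h0, mem_filter]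
    refine ⟨h3, ?_⟩
    have hsub : (Sc m c).erase x ⊆ A ∩ Sc m c :=
      subset_inter h1 (erase_subset x (Sc m c))
    have hcard := card_le_card hsub
    have := pred_card_le_card_erase (s := Sc m c) (a := x)
    rw [card_Sc m hc] at this
    omega
  · -- HM family
    set i := s - 1 with hi
    have hrowlt : s + 2 < Rw m := by show _ < 2*m+4; omega
    by_cases hx : x = mk m c (s+2)
    · -- use the set Bc itself
      refine ⟨Bc m c i, ?_, ?_⟩
      · unfold Fam
        rw [if_neg h0, mem_filter]
        exact ⟨mem_powersetCard.2 ⟨subset_univ _, card_Bc m hc i⟩, Or.inl rfl⟩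
      · intro hmem
        rcases mem_union.1 hmem with hS | hW
        · rw [mem_Sc m hc] at hS
          have := congrArg (row m) hx
          rw [row_mk m hc hrowlt] at this
          omega
        · rw [mem_Wc m i] at hW
          obtain ⟨t, ht, hxt⟩ := hW
          have := congrArg (row m) (hx.symm.trans hxt)
          rw [row_mk m hc hrowlt, row_mk m hc (wrow_lt m i t)] at this
          have hmod : (i + 1 + t) % (2*m+1) = (i + 0) % (2*m+1) := by
            unfold wrow at this
            rw [Nat.mod_eq_of_lt (show i + 0 < 2*m+1 by omega)]
            omega
          have : 1 + t = 0 := mod_add_cancel (M := 2*m+1) (a := i)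
            (by omega) (by omega) (by rw [show i + (1+t) = i + 1 + t by ring]; exact hmod)
          omega
    · -- extend {mk c (s+2), b0} with b0 ∈ Bc \ {x}
      have hcB : (Bc m c i).card = m + 3 := card_Bc m hc i
      have hne : ((Bc m c i).erase x).Nonempty := by
        rw [← card_pos]
        have := pred_card_le_card_erase (s := Bc m c i) (a := x)
        omega
      obtain ⟨b0, hb0⟩ := hne
      have hb0B : b0 ∈ Bc m c i := mem_of_mem_erase hb0
      have hb0x : b0 ≠ x := ne_of_mem_erase hb0
      have hxbase : x ∉ ({mk m c (s+2), b0} : Finset (Fin (N m))) := by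
        simp only [mem_insert, mem_singleton]
        rintro (h | h)
        · exact hx h
        · exact hb0x h.symm
      have hbcard : ({mk m c (s+2), b0} : Finset (Fin (N m))).card ≤ m + 3 := by
        have := card_insert_le (mk m c (s+2)) ({b0} : Finset (Fin (N m)))
        rw [card_singleton] at this
        omega
      obtain ⟨A, h1, h2, h3⟩ := extend_set m {mk m c (s+2), b0} x hbcard hxbase
      refine ⟨A, ?_, h2⟩
      unfold Fam
      rw [if_neg h0, mem_filter]
      refine ⟨h3, Or.inr ⟨h1 (mem_insert_self _ _), ⟨b0, mem_inter.2 ⟨?_, hb0B⟩⟩⟩⟩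
      exact h1 (mem_insert_of_mem (mem_singleton_self b0))

end NIC

namespace NIC

open Finset

lemma covered (m : ℕ) (A : Finset (Fin (N m))) (hA : A ∈ Finset.univ.powersetCard (m+3)) :
    ∃ c < m + 2, ∃ s < 2*m+2, A ∈ Fam m c s := by
  obtain ⟨hsubA, hcard⟩ := mem_powersetCard.1 hA
  by_cases htri : ∃ c < m+2, 2 ≤ (A ∩ Sc m c).card
  · obtain ⟨c, hc, h2⟩ := htri
    exact ⟨c, hc, 0, by omega, by unfold Fam; rw [if_pos rfl, mem_filter]; exact ⟨hA, h2⟩⟩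
  · push_neg at htri
    have hmap : ∀ a ∈ A, col m a ∈ Finset.range (m+2) := fun a _ => mem_range.2 (col_lt m a)
    have hlt : (Finset.range (m+2)).card < A.card := by rw [card_range, hcard]; omega
    obtain ⟨x, hxA, y, hyA, hxy, hcol⟩ := exists_ne_map_eq_of_card_lt_of_maps_to hlt hmap
    set c := col m x with hc'
    have hc : c < m+2 := col_lt m x
    have hrowne : row m x ≠ row m y := fun h => hxy (cell_eq m x y hcol h)
    have hrx : row m x < 2*m+4 := row_lt m x
    have hry : row m y < 2*m+4 := row_lt m y
    have hnotboth : ¬ (row m x < 3 ∧ row m y < 3) := by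
      rintro ⟨h1, h2⟩
      have hxS : x ∈ A ∩ Sc m c := mem_inter.2 ⟨hxA, (mem_Sc m hc x).2 ⟨rfl, h1⟩⟩
      have hyS : y ∈ A ∩ Sc m c := mem_inter.2 ⟨hyA, (mem_Sc m hc y).2 ⟨hcol.symm, h2⟩⟩
      have hpair : ({x, y} : Finset (Fin (N m))) ⊆ A ∩ Sc m c := by
        intro z hz
        rcases mem_insert.1 hz with rfl | hz
        · exact hxS
        · rw [mem_singleton.1 hz]; exact hyS
      have hcp := card_le_card hpair
      rw [card_insert_of_notMem (by simp [hxy]), card_singleton] at hcp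
      have := htri c hc
      omega
    have main : ∀ (u v : Fin (N m)), u ∈ A → v ∈ A → col m u = c →
        3 ≤ row m u → v ∈ Bc m c (row m u - 3) → ∃ s < 2*m+2, A ∈ Fam m c s := by
      intro u v huA hvA hcu hru hvB
      have hru2 : row m u < 2*m+4 := row_lt m u
      refine ⟨row m u - 2, by omega, ?_⟩
      unfold Fam
      rw [if_neg (show row m u - 2 ≠ 0 by omega), mem_filter]
      refine ⟨hA, Or.inr ⟨?_, ⟨v, mem_inter.2 ⟨hvA, ?_⟩⟩⟩⟩
      · rw [show row m u - 2 + 2 = row m u by omega, ← hcu, mk_col_row]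
        exact huA
      · rw [show row m u - 2 - 1 = row m u - 3 by omega]
        exact hvB
    rcases lt_or_ge (row m x) 3 with h1 | h1
    · have h2 : 3 ≤ row m y := by omega
      refine ⟨c, hc, main y x hyA hxA hcol.symm h2 ?_⟩
      exact Sc_subset_Bc m c _ ((mem_Sc m hc x).2 ⟨rfl, h1⟩)
    · rcases lt_or_ge (row m y) 3 with h2 | h2
      · refine ⟨c, hc, main x y hxA hyA rfl h1 ?_⟩
        exact Sc_subset_Bc m c _ ((mem_Sc m hc y).2 ⟨hcol.symm, h2⟩)
      · have hax : row m x - 3 < 2*m+1 := by omega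
        have hby : row m y - 3 < 2*m+1 := by omega
        have hne' : row m x - 3 ≠ row m y - 3 := by omega
        rcases window_cover m hax hby hne' with ⟨t, ht, heq⟩ | ⟨t, ht, heq⟩
        · have hw : wrow m (row m x - 3) t = row m y := by
            unfold wrow; omega
          refine ⟨c, hc, main x y hxA hyA rfl h1 ?_⟩
          have hyeq : y = mk m c (wrow m (row m x - 3) t) := by
            rw [hw, show c = col m y from hcol]; exact (mk_col_row m y).symm
          exact mem_union.2 (Or.inr ((mem_Wc m _ y).2 ⟨t, ht, hyeq⟩))
        · have hw : wrow m (row m y - 3) t = row m x := by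
            unfold wrow; omega
          refine ⟨c, hc, main y x hyA hxA hcol.symm h2 ?_⟩
          have hxeq : x = mk m c (wrow m (row m y - 3) t) := by
            rw [hw, hc']; exact (mk_col_row m x).symm
          exact mem_union.2 (Or.inr ((mem_Wc m _ x).2 ⟨t, ht, hxeq⟩))

end NIC

open Finset NIC in
/-- For `k ≥ 3` and `n = 2(k-1)²`, there exist `(2k-4)(k-1) = n - 2k + 2` intersecting
families of `k`-subsets of `[n]`, none of which is trivial, covering all `k`-subsets. -/
theorem exists_nontrivial_intersecting_cover (k : ℕ) (hk : 3 ≤ k) :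
    (2 * k - 4) * (k - 1) = 2 * (k - 1) ^ 2 - 2 * k + 2 ∧
    ∃ F : Fin ((2 * k - 4) * (k - 1)) → Finset (Finset (Fin (2 * (k - 1) ^ 2))),
      (∀ i, ∀ A ∈ F i, ∀ B ∈ F i, (A ∩ B).Nonempty) ∧
      (∀ i, ¬ ∃ x : Fin (2 * (k - 1) ^ 2), ∀ A ∈ F i, x ∈ A) ∧
      Finset.univ.biUnion F = Finset.powersetCard k Finset.univ := by
  obtain ⟨m, rfl⟩ : ∃ m, k = m + 3 := ⟨k - 3, by omega⟩
  have e1 : 2 * (m + 3) - 4 = 2 * m + 2 := by omega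
  have e2 : (m + 3) - 1 = m + 2 := by omega
  rw [e1, e2]
  constructor
  · have h1 : 2*(m+2)^2 = 2*(m*m)+8*m+8 := by ring
    have h2 : (2*m+2)*(m+2) = 2*(m*m)+6*m+4 := by ring
    omega
  · refine ⟨fun j => Fam m (j.val / (2*m+2)) (j.val % (2*m+2)), ?_, ?_, ?_⟩
    · intro i
      have hc : i.val / (2*m+2) < m + 2 := by
        have hi : i.val < (2*m+2)*(m+2) := i.isLt
        exact (Nat.div_lt_iff_lt_mul (by omega)).2 (lt_of_lt_of_eq hi (mul_comm _ _))
      exact Fam_intersecting m hc _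
    · intro i ⟨x, hx⟩
      have hc : i.val / (2*m+2) < m + 2 := by
        have hi : i.val < (2*m+2)*(m+2) := i.isLt
        exact (Nat.div_lt_iff_lt_mul (by omega)).2 (lt_of_lt_of_eq hi (mul_comm _ _))
      have hs : i.val % (2*m+2) < 2*m+2 := Nat.mod_lt _ (by omega)
      obtain ⟨A, hA, hxA⟩ := Fam_nontrivial m hc hs x
      exact hxA (hx A hA)
    · ext A
      simp only [mem_biUnion, mem_univ, true_and]
      constructor
      · rintro ⟨i, hi⟩
        exact Fam_subset m _ _ hi
      · intro hA
        obtain ⟨c, hc, s, hs, hmem⟩ := covered m A hA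
        have hidx : c * (2*m+2) + s < (2*m+2)*(m+2) := by
          have h3 : (c+1) * (2*m+2) ≤ (m+2) * (2*m+2) := Nat.mul_le_mul_right _ (by omega)
          have e3 : (c+1)*(2*m+2) = c*(2*m+2) + (2*m+2) := by ring
          have e4 : (m+2)*(2*m+2) = (2*m+2)*(m+2) := by ring
          omega
        refine ⟨⟨c * (2*m+2) + s, hidx⟩, ?_⟩
        have hd : (c * (2*m+2) + s) / (2*m+2) = c := by
          rw [add_comm, Nat.add_mul_div_right _ _ (by omega : 0 < 2*m+2),
            Nat.div_eq_of_lt hs, Nat.zero_add]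
        have hm : (c * (2*m+2) + s) % (2*m+2) = s := by
          rw [add_comm, Nat.add_mul_mod_self_right, Nat.mod_eq_of_lt hs]
        show A ∈ Fam m ((c * (2*m+2) + s) / (2*m+2)) ((c * (2*m+2) + s) % (2*m+2))
        rw [hd, hm]
        exact hmem
end

section
/- For every integer k ≥ 3, setting n = 2(k−1)², there exists a partition of the family of all k-element subsets of [n] into n − 2k + 2 = 2(k−1)(k−2) pairwise disjoint intersecting families, none of which is trivial. (Equivalently, the Kneser graph KG_{n,k} admits a proper coloring with n − 2k + 2 colors in which no color class is a star; hence n(k) ≥ 2(k−1)².) -/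
open Finset

namespace NK

variable (t : ℕ)

/-- block size -/
def m : ℕ := 2*t+4
/-- number of star centers per block (= m-3) -/
def qq : ℕ := 2*t+1
/-- ground set size -/
def N : ℕ := 2*(t+2)^2
/-- number of colors -/
def C : ℕ := 2*(t+2)*(t+1)

lemma N_eq : N t = (t+2) * m t := by unfold N m; ring

lemma N_pos : 0 < N t := by unfold N; positivity

lemma m_pos : 0 < m t := by unfold m; omega

/-- block of an element -/
def blk (e : Fin (N t)) : ℕ := e.1 / m t
/-- position of an element within its block -/
def pos (e : Fin (N t)) : ℕ := e.1 % m t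

def emk (j p : ℕ) : Fin (N t) := ⟨(j * m t + p) % N t, Nat.mod_lt _ (N_pos t)⟩

lemma emk_val {j p : ℕ} (hj : j < t+2) (hp : p < m t) : (emk t j p).1 = j * m t + p := by
  have h : j * m t + p < N t := by
    rw [N_eq]
    calc j * m t + p < j * m t + m t := by omega
    _ = (j+1) * m t := by ring
    _ ≤ (t+2) * m t := Nat.mul_le_mul_right _ (by omega)
  exact Nat.mod_eq_of_lt h

lemma blk_emk {j p : ℕ} (hj : j < t+2) (hp : p < m t) : blk t (emk t j p) = j := by
  unfold blk; rw [emk_val t hj hp]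
  rw [Nat.add_comm, Nat.add_mul_div_right _ _ (m_pos t), Nat.div_eq_of_lt hp]; omega

lemma pos_emk {j p : ℕ} (hj : j < t+2) (hp : p < m t) : pos t (emk t j p) = p := by
  unfold pos; rw [emk_val t hj hp]
  rw [Nat.add_comm, Nat.add_mul_mod_self_right, Nat.mod_eq_of_lt hp]

lemma blk_lt (e : Fin (N t)) : blk t e < t+2 := by
  unfold blk
  have h : (e:ℕ) < (t+2) * m t := by rw [← N_eq]; exact e.2
  exact Nat.div_lt_iff_lt_mul (m_pos t) |>.2 h

lemma pos_lt (e : Fin (N t)) : pos t e < m t := Nat.mod_lt _ (m_pos t)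

lemma emk_blk_pos (e : Fin (N t)) : emk t (blk t e) (pos t e) = e := by
  apply Fin.ext
  unfold emk blk pos
  simp only
  rw [Nat.div_add_mod' (e:ℕ) (m t), Nat.mod_eq_of_lt e.2]

lemma emk_inj {j p j' p' : ℕ} (hj : j < t+2) (hp : p < m t) (hj' : j' < t+2) (hp' : p' < m t)
    (h : emk t j p = emk t j' p') : j = j' ∧ p = p' := by
  have hv : j * m t + p = j' * m t + p' := by
    have := congrArg Fin.val h
    rwa [emk_val t hj hp, emk_val t hj' hp'] at this
  have h1 : j = j' := by
    have e1 : (j * m t + p) / m t = j := by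
      rw [Nat.add_comm, Nat.add_mul_div_right _ _ (m_pos t), Nat.div_eq_of_lt hp]; omega
    have e2 : (j' * m t + p') / m t = j' := by
      rw [Nat.add_comm, Nat.add_mul_div_right _ _ (m_pos t), Nat.div_eq_of_lt hp']; omega
    rw [← e1, ← e2, hv]
  refine ⟨h1, ?_⟩
  subst h1
  omega

/-- fiber of A in block j -/
def fib (A : Finset (Fin (N t))) (j : ℕ) : Finset (Fin (N t)) := A.filter fun e => blk t e = j

lemma fib_card_le (A : Finset (Fin (N t))) {j : ℕ} (hj : t+2 ≤ j) : (fib t A j) = ∅ := by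
  unfold fib
  apply filter_eq_empty_iff.2
  intro e _
  have := blk_lt t e
  omega

open Classical in
/-- the least block containing two elements of A -/
noncomputable def jsel (A : Finset (Fin (N t))) : ℕ :=
  if h : ∃ j, 2 ≤ (fib t A j).card then Nat.find h else 0

lemma exists_fib (A : Finset (Fin (N t))) (hA : A.card = t+3) :
    ∃ j, 2 ≤ (fib t A j).card := by
  by_contra hcon
  push_neg at hcon
  have hsum : A.card = ∑ j ∈ range (t+2), (fib t A j).card := by
    unfold fib
    exact card_eq_sum_card_fiberwise (fun e _ => mem_range.2 (blk_lt t e))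
  have hle : ∑ j ∈ range (t+2), (fib t A j).card ≤ ∑ _j ∈ range (t+2), 1 :=
    Finset.sum_le_sum (fun j _ => by have := hcon j; omega)
  simp at hle
  omega

lemma jsel_spec (A : Finset (Fin (N t))) (hA : A.card = t+3) :
    2 ≤ (fib t A (jsel t A)).card ∧ ∀ j < jsel t A, (fib t A j).card < 2 := by
  classical
  unfold jsel
  rw [dif_pos (exists_fib t A hA)]
  refine ⟨Nat.find_spec (exists_fib t A hA), fun j hj => ?_⟩
  have := Nat.find_min (exists_fib t A hA) hj
  omega

lemma jsel_eq (A : Finset (Fin (N t))) {j : ℕ}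
    (h1 : 2 ≤ (fib t A j).card) (h2 : ∀ j' < j, (fib t A j').card < 2) : jsel t A = j := by
  classical
  unfold jsel
  have hex : ∃ j, 2 ≤ (fib t A j).card := ⟨j, h1⟩
  rw [dif_pos hex]
  rw [Nat.find_eq_iff]
  exact ⟨h1, fun n hn => by have := h2 n hn; omega⟩

lemma jsel_lt (A : Finset (Fin (N t))) : jsel t A < t+2 := by
  classical
  unfold jsel
  split
  · next h =>
    by_contra hcon
    have h2 := Nat.find_spec h
    rw [fib_card_le t A (by omega)] at h2
    simp at h2
  · omega

/-- positions of A within its selected block -/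
noncomputable def psA (A : Finset (Fin (N t))) : Finset ℕ :=
  (fib t A (jsel t A)).image (pos t)

lemma psA_mem {A : Finset (Fin (N t))} {w : ℕ} (hw : w ∈ psA t A) :
    w < m t ∧ emk t (jsel t A) w ∈ A := by
  unfold psA fib at hw
  obtain ⟨e, he, rfl⟩ := Finset.mem_image.1 hw
  rw [mem_filter] at he
  refine ⟨pos_lt t e, ?_⟩
  rw [← he.2, emk_blk_pos]
  exact he.1

lemma psA_card (A : Finset (Fin (N t))) : (psA t A).card = (fib t A (jsel t A)).card := by
  apply Finset.card_image_of_injOn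
  intro e he e' he' hpos
  rw [Finset.mem_coe] at he he'
  unfold fib at he he'
  rw [mem_filter] at he he'
  rw [← emk_blk_pos t e, ← emk_blk_pos t e', he.2, he'.2, hpos]

noncomputable def p1 (A : Finset (Fin (N t))) : ℕ := sInf {x | x ∈ psA t A}
noncomputable def p2 (A : Finset (Fin (N t))) : ℕ := sInf {x | x ∈ psA t A ∧ x ≠ p1 t A}

lemma pair_facts (A : Finset (Fin (N t))) (hA : A.card = t+3) :
    p1 t A ∈ psA t A ∧ p2 t A ∈ psA t A ∧ p1 t A < p2 t A ∧
    (∀ x ∈ psA t A, p1 t A ≤ x) ∧ (∀ x ∈ psA t A, x ≠ p1 t A → p2 t A ≤ x) := by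
  have hcard : 2 ≤ (psA t A).card := by
    rw [psA_card]; exact (jsel_spec t A hA).1
  have hne1 : {x | x ∈ psA t A}.Nonempty := by
    have h0 : 0 < (psA t A).card := by omega
    obtain ⟨x, hx⟩ := Finset.card_pos.1 h0
    exact ⟨x, hx⟩
  have hp1 : p1 t A ∈ psA t A := Nat.sInf_mem hne1
  have hmin1 : ∀ x ∈ psA t A, p1 t A ≤ x := fun x hx => Nat.sInf_le hx
  have hne2 : {x | x ∈ psA t A ∧ x ≠ p1 t A}.Nonempty := by
    have h1 : 1 < (psA t A).card := by omega
    obtain ⟨b, hb, hbne⟩ := Finset.exists_mem_ne h1 (p1 t A)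
    exact ⟨b, hb, hbne⟩
  have hp2 : p2 t A ∈ psA t A ∧ p2 t A ≠ p1 t A := Nat.sInf_mem hne2
  have hmin2 : ∀ x ∈ psA t A, x ≠ p1 t A → p2 t A ≤ x := fun x hx hxe => Nat.sInf_le ⟨hx, hxe⟩
  have hlt : p1 t A < p2 t A := by
    have := hmin1 _ hp2.1
    have := hp2.2
    omega
  exact ⟨hp1, hp2.1, hlt, hmin1, hmin2⟩

/-- w is in the arc of partners assigned to center u (a cyclic interval of length t below u in Z_qq) -/
def inArc (u w : ℕ) : Prop :=
  (w < u ∧ u < qq t ∧ u ≤ w + t) ∨ (u < w ∧ w < qq t ∧ qq t + u ≤ w + t)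

instance : DecidablePred fun p : ℕ × ℕ => inArc t p.1 p.2 := fun _ => by unfold inArc; infer_instance

instance (u w : ℕ) : Decidable (inArc t u w) := by unfold inArc; infer_instance

/-- positions of the anchor set for center u: the three top positions plus the arc of u -/
def Wfin (u : ℕ) : Finset ℕ :=
  insert (qq t) (insert (qq t + 1) (insert (qq t + 2) ((range (qq t)).filter (inArc t u))))

lemma mem_Wfin {u w : ℕ} : w ∈ Wfin t u ↔ (w = qq t ∨ w = qq t + 1 ∨ w = qq t + 2 ∨ inArc t u w) := by
  unfold Wfin
  simp only [mem_insert, mem_filter, mem_range]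
  constructor
  · rintro (h|h|h|⟨h1,h2⟩) <;> tauto
  · rintro (h|h|h|h2)
    · tauto
    · tauto
    · tauto
    · right; right; right
      refine ⟨?_, h2⟩
      unfold inArc at h2
      omega

lemma Wfin_lt {u w : ℕ} (hw : w ∈ Wfin t u) : w < m t := by
  rw [mem_Wfin] at hw
  unfold inArc at hw
  unfold qq m at *
  omega

lemma arc_card {u : ℕ} (hu : u < qq t) :
    ((range (qq t)).filter (inArc t u)).card = t := by
  have himg : (range (qq t)).filter (inArc t u)
      = (range t).image (fun d => if d < u then u - 1 - d else u + qq t - 1 - d) := by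
    ext w
    simp only [mem_filter, mem_range, mem_image]
    constructor
    · rintro ⟨hwq, harc⟩
      unfold inArc at harc
      by_cases hc : w < u
      · exact ⟨u - 1 - w, by omega, by rw [if_pos (by omega)]; omega⟩
      · refine ⟨u + qq t - 1 - w, by unfold qq at *; omega, ?_⟩
        rw [if_neg (by unfold qq at *; omega)]
        unfold qq at *; omega
    · rintro ⟨d, hd, rfl⟩
      unfold inArc qq at *
      split <;> omega
  rw [himg]
  rw [Finset.card_image_of_injOn, card_range]
  intro d hd d' hd' h
  rw [mem_coe, mem_range] at hd hd'
  unfold qq at *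
  dsimp only at h
  split at h <;> split at h <;> omega

lemma Wfin_card {u : ℕ} (hu : u < qq t) : (Wfin t u).card = t+3 := by
  unfold Wfin
  have harc : ∀ w ∈ (range (qq t)).filter (inArc t u), w < qq t := by
    intro w hw; exact mem_range.1 (mem_filter.1 hw).1
  rw [card_insert_of_notMem, card_insert_of_notMem, card_insert_of_notMem, arc_card t hu]
  · intro h; have := harc _ h; omega
  · simp only [mem_insert]
    rintro (h|h)
    · omega
    · have := harc _ h; omega
  · simp only [mem_insert]
    rintro (h|h|h)
    · omega
    · omega
    · have := harc _ h; omega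

lemma not_self_Wfin {u : ℕ} (hu : u < qq t) : u ∉ Wfin t u := by
  rw [mem_Wfin]
  unfold inArc
  omega

/-- if two centers have the same arc, they are equal -/
lemma center_eq {u u' : ℕ} (hu : u < qq t) (hu' : u' < qq t)
    (h : ∀ w, inArc t u w ↔ inArc t u' w) : u = u' := by
  rcases Nat.eq_zero_or_pos t with ht | ht
  · unfold qq at *; omega
  have h1 := h (if u = 0 then qq t - 1 else u - 1)
  have h2 := h u
  unfold inArc qq at *
  by_cases hu0 : u = 0 <;> simp only [hu0, if_true, if_false] at h1 <;> omega

/-- the anchor k-set for block j, center u -/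
def anchor (j u : ℕ) : Finset (Fin (N t)) := (Wfin t u).image (emk t j)

lemma mem_anchor {j u : ℕ} (hj : j < t+2) {e : Fin (N t)} :
    e ∈ anchor t j u ↔ (blk t e = j ∧ pos t e ∈ Wfin t u) := by
  unfold anchor
  rw [Finset.mem_image]
  constructor
  · rintro ⟨w, hw, rfl⟩
    have hwm := Wfin_lt t hw
    rw [blk_emk t hj hwm, pos_emk t hj hwm]
    exact ⟨rfl, hw⟩
  · rintro ⟨hb, hp⟩
    exact ⟨pos t e, hp, by rw [← hb, emk_blk_pos]⟩

lemma anchor_card {j u : ℕ} (hj : j < t+2) (hu : u < qq t) : (anchor t j u).card = t+3 := by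
  unfold anchor
  rw [Finset.card_image_of_injOn, Wfin_card t hu]
  intro w hw w' hw' h
  rw [mem_coe] at hw hw'
  exact (emk_inj t hj (Wfin_lt t hw) hj (Wfin_lt t hw') h).2

lemma anchor_inj {j u u' : ℕ} (hj : j < t+2) (hu : u < qq t) (hu' : u' < qq t)
    (h : anchor t j u = anchor t j u') : u = u' := by
  apply center_eq t hu hu'
  intro w
  have key : ∀ v, v < qq t → ∀ x, inArc t v x → x ∈ Wfin t v := by
    intro v hv x hx
    rw [mem_Wfin]; tauto
  have hiff : ∀ x, x < m t → (x ∈ Wfin t u ↔ x ∈ Wfin t u') := by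
    intro x hx
    constructor
    · intro hmem
      have : emk t j x ∈ anchor t j u := by
        rw [mem_anchor t hj, blk_emk t hj hx, pos_emk t hj hx]; exact ⟨rfl, hmem⟩
      rw [h] at this
      rw [mem_anchor t hj, pos_emk t hj hx] at this
      exact this.2
    · intro hmem
      have : emk t j x ∈ anchor t j u' := by
        rw [mem_anchor t hj, blk_emk t hj hx, pos_emk t hj hx]; exact ⟨rfl, hmem⟩
      rw [← h] at this
      rw [mem_anchor t hj, pos_emk t hj hx] at this
      exact this.2
  constructor
  · intro hw
    have hwq : w < qq t := by unfold inArc at hw; omega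
    have := (hiff w (by unfold qq m at *; omega)).1 (key u hu w hw)
    rw [mem_Wfin] at this
    rcases this with h1|h1|h1|h1 <;> first | omega | exact h1
  · intro hw
    have hwq : w < qq t := by unfold inArc at hw; omega
    have := (hiff w (by unfold qq m at *; omega)).2 (key u' hu' w hw)
    rw [mem_Wfin] at this
    rcases this with h1|h1|h1|h1 <;> first | omega | exact h1

/-- the natural (pair-based) star/triangle index of A: values in [0, qq]; qq means triangle -/
noncomputable def esel (A : Finset (Fin (N t))) : ℕ :=
  if qq t ≤ p1 t A then qq t
  else if qq t ≤ p2 t A then p1 t A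
  else if t+1 ≤ p2 t A - p1 t A then p1 t A
  else p2 t A

lemma esel_le (A : Finset (Fin (N t))) : esel t A ≤ qq t := by
  unfold esel
  split_ifs <;> omega

def isAnchor (A : Finset (Fin (N t))) : Prop :=
  ∃ u, u < qq t ∧ A = anchor t (jsel t A) u

open Classical in
noncomputable def sel2 (A : Finset (Fin (N t))) : ℕ :=
  if h : isAnchor t A then Nat.find h else esel t A

lemma sel2_lt (A : Finset (Fin (N t))) : sel2 t A < 2*t+2 := by
  classical
  unfold sel2
  split
  · next h =>
    have := (Nat.find_spec h).1
    unfold qq at *; omega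
  · have := esel_le t A
    unfold qq at *; omega

lemma sel2_anchor {A : Finset (Fin (N t))} (h : isAnchor t A) :
    sel2 t A < qq t ∧ A = anchor t (jsel t A) (sel2 t A) := by
  classical
  unfold sel2
  rw [dif_pos h]
  exact Nat.find_spec h

lemma sel2_not_anchor {A : Finset (Fin (N t))} (h : ¬ isAnchor t A) : sel2 t A = esel t A := by
  classical
  unfold sel2
  rw [dif_neg h]

/-- encoding a (block, star-index) pair as a color -/
def encode (j s : ℕ) (hj : j < t+2) (hs : s < 2*t+2) : Fin (C t) :=
  ⟨j * (2*t+2) + s, by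
    unfold C
    calc j * (2*t+2) + s < j * (2*t+2) + (2*t+2) := by omega
    _ = (j+1) * (2*t+2) := by ring
    _ ≤ (t+2) * (2*t+2) := Nat.mul_le_mul_right _ (by omega)
    _ = 2*(t+2)*(t+1) := by ring⟩

lemma encode_inj {j s j' s' : ℕ} (hj : j < t+2) (hs : s < 2*t+2) (hj' : j' < t+2)
    (hs' : s' < 2*t+2) (h : encode t j s hj hs = encode t j' s' hj' hs') : j = j' ∧ s = s' := by
  have hv : j * (2*t+2) + s = j' * (2*t+2) + s' := congrArg Fin.val h
  have e1 : ∀ a b : ℕ, b < 2*t+2 → (a * (2*t+2) + b) / (2*t+2) = a := by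
    intro a b hb
    rw [Nat.add_comm, Nat.add_mul_div_right _ _ (by omega : 0 < 2*t+2), Nat.div_eq_of_lt hb]
    omega
  have h1 : j = j' := by rw [← e1 j s hs, ← e1 j' s' hs', hv]
  refine ⟨h1, ?_⟩
  subst h1
  omega

lemma encode_surj (i : Fin (C t)) :
    ∃ (j s : ℕ) (hj : j < t+2) (hs : s < 2*t+2), i = encode t j s hj hs := by
  have hi := i.2
  have hC : C t = (t+2) * (2*t+2) := by unfold C; ring
  refine ⟨i.1 / (2*t+2), i.1 % (2*t+2), ?_, Nat.mod_lt _ (by omega), ?_⟩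
  · apply Nat.div_lt_iff_lt_mul (by omega : 0 < 2*t+2) |>.2
    exact lt_of_lt_of_eq hi hC
  · apply Fin.ext
    unfold encode
    simp only
    rw [Nat.div_add_mod' (i:ℕ) (2*t+2)]

noncomputable def colorFn (A : Finset (Fin (N t))) : Fin (C t) :=
  encode t (jsel t A) (sel2 t A) (jsel_lt t A) (sel2_lt t A)

lemma colorFn_eq {A B : Finset (Fin (N t))} (h : colorFn t A = colorFn t B) :
    jsel t A = jsel t B ∧ sel2 t A = sel2 t B :=
  encode_inj t _ _ _ _ h

lemma center_mem {A : Finset (Fin (N t))} (hA : A.card = t+3) (hlt : esel t A < qq t) :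
    esel t A ∈ psA t A := by
  obtain ⟨hp1, hp2, hlt12, hmin1, hmin2⟩ := pair_facts t A hA
  unfold esel at *
  split_ifs at * <;> first | omega | exact hp1 | exact hp2

lemma partner {A : Finset (Fin (N t))} (hA : A.card = t+3) (hlt : esel t A < qq t) :
    ∃ w ∈ psA t A, w ∈ Wfin t (esel t A) ∧ w ≠ esel t A := by
  obtain ⟨hp1, hp2, hlt12, hmin1, hmin2⟩ := pair_facts t A hA
  have hm2 : p2 t A < m t := (psA_mem t hp2).1
  unfold esel at *
  split_ifs at * with h1 h2 h3
  · omega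
  · refine ⟨p2 t A, hp2, ?_, by omega⟩
    rw [mem_Wfin]
    unfold m qq at *
    omega
  · refine ⟨p2 t A, hp2, ?_, by omega⟩
    rw [mem_Wfin]
    right; right; right
    unfold inArc
    right
    unfold qq at *
    omega
  · refine ⟨p1 t A, hp1, ?_, by omega⟩
    rw [mem_Wfin]
    right; right; right
    unfold inArc
    left
    omega

lemma tri {A : Finset (Fin (N t))} (hA : A.card = t+3) (heq : esel t A = qq t) :
    qq t ≤ p1 t A := by
  obtain ⟨hp1, hp2, hlt12, hmin1, hmin2⟩ := pair_facts t A hA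
  unfold esel at heq
  split_ifs at heq <;> omega

lemma anchor_partner_inter {A B : Finset (Fin (N t))} (hB : B.card = t+3)
    (hj : jsel t A = jsel t B) (haA : isAnchor t A) (haB : ¬ isAnchor t B)
    (hs : sel2 t A = sel2 t B) : (A ∩ B).Nonempty := by
  obtain ⟨hult, hAeq⟩ := sel2_anchor t haA
  have heB : sel2 t B = esel t B := sel2_not_anchor t haB
  have heBlt : esel t B < qq t := by omega
  obtain ⟨w, hwps, hwW, _⟩ := partner t hB heBlt
  obtain ⟨hwm, hwB⟩ := psA_mem t hwps
  refine ⟨emk t (jsel t B) w, mem_inter.2 ⟨?_, hwB⟩⟩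
  rw [hAeq, hj]
  rw [mem_anchor t (jsel_lt t B), blk_emk t (jsel_lt t B) hwm, pos_emk t (jsel_lt t B) hwm]
  refine ⟨rfl, ?_⟩
  rw [hs, heB]
  exact hwW

lemma intersecting {A B : Finset (Fin (N t))} (hA : A.card = t+3) (hB : B.card = t+3)
    (hj : jsel t A = jsel t B) (hs : sel2 t A = sel2 t B) : (A ∩ B).Nonempty := by
  by_cases haA : isAnchor t A <;> by_cases haB : isAnchor t B
  · -- both anchors
    obtain ⟨hu, hAeq⟩ := sel2_anchor t haA
    obtain ⟨hu', hBeq⟩ := sel2_anchor t haB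
    have : A = B := by rw [hAeq, hBeq, hj, hs]
    subst this
    rw [inter_self]
    exact card_pos.1 (by omega)
  · exact anchor_partner_inter t hB hj haA haB hs
  · rw [inter_comm]
    exact anchor_partner_inter t hA hj.symm haB haA hs.symm
  · -- neither anchor
    have heA : sel2 t A = esel t A := sel2_not_anchor t haA
    have heB : sel2 t B = esel t B := sel2_not_anchor t haB
    have hle := esel_le t A
    rcases Nat.lt_or_ge (esel t A) (qq t) with hlt | hge
    · have huA := center_mem t hA hlt
      have huB := center_mem t hB (by omega : esel t B < qq t)
      have heq : esel t A = esel t B := by omega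
      refine ⟨emk t (jsel t A) (esel t A), mem_inter.2 ⟨(psA_mem t huA).2, ?_⟩⟩
      rw [hj, heq]
      exact (psA_mem t huB).2
    · -- triangle class
      have heqA : esel t A = qq t := by omega
      have heqB : esel t B = qq t := by omega
      have htA := tri t hA heqA
      have htB := tri t hB heqB
      obtain ⟨hp1A, hp2A, hltA, _, _⟩ := pair_facts t A hA
      obtain ⟨hp1B, hp2B, hltB, _, _⟩ := pair_facts t B hB
      have hm2A : p2 t A < m t := (psA_mem t hp2A).1
      have hm2B : p2 t B < m t := (psA_mem t hp2B).1
      have hcases : p1 t A = p1 t B ∨ p1 t A = p2 t B ∨ p2 t A = p1 t B ∨ p2 t A = p2 t B := by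
        unfold m qq at *
        omega
      have key : ∀ w, w ∈ psA t A → w ∈ psA t B → (A ∩ B).Nonempty := by
        intro w hwA hwB
        refine ⟨emk t (jsel t A) w, mem_inter.2 ⟨(psA_mem t hwA).2, ?_⟩⟩
        rw [hj]
        exact (psA_mem t hwB).2
      rcases hcases with h|h|h|h
      · exact key _ hp1A (h ▸ hp1B)
      · exact key _ hp1A (h ▸ hp2B)
      · exact key _ hp2A (h ▸ hp1B)
      · exact key _ hp2A (h ▸ hp2B)

lemma witness (j a b : ℕ) (hj : j < t+2) (hab : a < b) (hb : b < m t) (x : Fin (N t))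
    (hxa : x ≠ emk t j a) (hxb : x ≠ emk t j b) :
    ∃ A : Finset (Fin (N t)), A.card = t+3 ∧ x ∉ A ∧ jsel t A = j ∧
      p1 t A = a ∧ p2 t A = b ∧ ¬ isAnchor t A := by
  classical
  set tp : ℕ → ℕ := fun j' => if x = emk t j' 0 then 1 else 0 with htp
  have htp_lt : ∀ j', tp j' < m t := by
    intro j'; simp only [htp]; split <;> unfold m <;> omega
  set tail : Finset (Fin (N t)) := ((range (t+2)).erase j).image (fun j' => emk t j' (tp j')) with htail
  set A : Finset (Fin (N t)) := insert (emk t j a) (insert (emk t j b) tail) with hAdef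
  have ha : a < m t := by omega
  -- blocks of members
  have htail_blk : ∀ e ∈ tail, blk t e ≠ j ∧ blk t e < t+2 := by
    intro e he
    rw [htail, Finset.mem_image] at he
    obtain ⟨j', hj', rfl⟩ := he
    rw [mem_erase, mem_range] at hj'
    rw [blk_emk t hj'.2 (htp_lt j')]
    exact ⟨hj'.1, hj'.2⟩
  have hmemA : ∀ e, e ∈ A ↔ (e = emk t j a ∨ e = emk t j b ∨ e ∈ tail) := by
    intro e; rw [hAdef]; simp [mem_insert]
  -- x not in A
  have hxA : x ∉ A := by
    rw [hmemA]
    push_neg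
    refine ⟨hxa, hxb, ?_⟩
    intro hx
    rw [htail, Finset.mem_image] at hx
    obtain ⟨j', hj', hxe⟩ := hx
    rw [mem_erase, mem_range] at hj'
    by_cases h0 : x = emk t j' 0
    · have : tp j' = 1 := by simp [htp, h0]
      rw [this] at hxe
      have := emk_inj t hj'.2 (by unfold m; omega : (0:ℕ) < m t) hj'.2 (by unfold m; omega : (1:ℕ) < m t)
        (by rw [← h0, hxe])
      omega
    · have : tp j' = 0 := by simp [htp, h0]
      rw [this] at hxe
      exact h0 hxe.symm
  -- cardinality
  have htail_card : tail.card = t+1 := by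
    have hinj : Set.InjOn (fun j' => emk t j' (tp j')) ((range (t+2)).erase j) := by
      intro j' hj' j'' hj'' h
      rw [mem_coe, mem_erase, mem_range] at hj' hj''
      exact (emk_inj t hj'.2 (htp_lt j') hj''.2 (htp_lt j'') h).1
    rw [htail, Finset.card_image_of_injOn hinj, card_erase_of_mem (mem_range.2 hj), card_range]
    omega
  have hbne : emk t j b ∉ tail := by
    intro h
    have := htail_blk _ h
    rw [blk_emk t hj hb] at this
    exact this.1 rfl
  have hane : emk t j a ∉ insert (emk t j b) tail := by
    rw [mem_insert]
    rintro (h | h)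
    · have := (emk_inj t hj ha hj hb h).2; omega
    · have := htail_blk _ h
      rw [blk_emk t hj ha] at this
      exact this.1 rfl
  have hcard : A.card = t+3 := by
    rw [hAdef, card_insert_of_notMem hane, card_insert_of_notMem hbne, htail_card]
  -- fibers
  have hfib_j : fib t A j = {emk t j a, emk t j b} := by
    ext e
    unfold fib
    rw [mem_filter, hmemA e, mem_insert, mem_singleton]
    constructor
    · rintro ⟨(rfl | rfl | h), hblk⟩
      · left; rfl
      · right; rfl
      · exact absurd hblk (htail_blk _ h).1
    · rintro (rfl | rfl)
      · exact ⟨Or.inl rfl, blk_emk t hj ha⟩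
      · exact ⟨Or.inr (Or.inl rfl), blk_emk t hj hb⟩
  have hfib_j_card : (fib t A j).card = 2 := by
    rw [hfib_j, card_insert_of_notMem, card_singleton]
    rw [mem_singleton]
    intro h
    have := (emk_inj t hj ha hj hb h).2; omega
  have hfib_other : ∀ j'', j'' ≠ j → (fib t A j'').card ≤ 1 := by
    intro j'' hne
    have hsub : fib t A j'' ⊆ {emk t j'' (tp j'')} := by
      intro e he
      unfold fib at he
      rw [mem_filter, hmemA e] at he
      obtain ⟨hmem, hblk⟩ := he
      rcases hmem with rfl | rfl | h
      · rw [blk_emk t hj ha] at hblk; omega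
      · rw [blk_emk t hj hb] at hblk; omega
      · rw [htail, Finset.mem_image] at h
        obtain ⟨j', hj', rfl⟩ := h
        rw [mem_erase, mem_range] at hj'
        rw [blk_emk t hj'.2 (htp_lt j')] at hblk
        subst hblk
        exact mem_singleton_self _
    calc (fib t A j'').card ≤ _ := card_le_card hsub
    _ = 1 := card_singleton _
  have hjsel : jsel t A = j := by
    apply jsel_eq t A hfib_j_card.ge
    intro j' hj'
    have := hfib_other j' (by omega)
    omega
  -- positions
  have hpsA : psA t A = {a, b} := by
    unfold psA
    rw [hjsel, hfib_j]
    rw [Finset.image_insert, Finset.image_singleton, pos_emk t hj ha, pos_emk t hj hb]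
  obtain ⟨hp1, hp2, hlt12, hmin1, hmin2⟩ := pair_facts t A hcard
  rw [hpsA] at hp1 hp2
  have hamem : a ∈ psA t A := by rw [hpsA]; exact mem_insert_self _ _
  have hbmem : b ∈ psA t A := by rw [hpsA]; simp
  have hp1a : p1 t A = a := by
    have h1 := hmin1 a hamem
    rw [mem_insert, mem_singleton] at hp1
    omega
  have hp2b : p2 t A = b := by
    rw [mem_insert, mem_singleton] at hp2
    omega
  -- not an anchor
  have hnoanchor : ¬ isAnchor t A := by
    rintro ⟨u, hu, hAanch⟩
    have hne : ((range (t+2)).erase j).Nonempty := by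
      apply card_pos.1
      rw [card_erase_of_mem (mem_range.2 hj), card_range]
      omega
    obtain ⟨j0, hj0⟩ := hne
    have hj0' := hj0
    rw [mem_erase, mem_range] at hj0'
    have hmem : emk t j0 (tp j0) ∈ A := by
      rw [hmemA]
      right; right
      rw [htail, Finset.mem_image]
      exact ⟨j0, hj0, rfl⟩
    rw [hAanch] at hmem
    rw [mem_anchor t (by rw [hjsel]; exact hj : jsel t A < t+2)] at hmem
    rw [blk_emk t hj0'.2 (htp_lt j0), hjsel] at hmem
    exact hj0'.1 hmem.1
  exact ⟨A, hcard, hxA, hjsel, hp1a, hp2b, hnoanchor⟩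

lemma jsel_anchor {j u : ℕ} (hj : j < t+2) (hu : u < qq t) : jsel t (anchor t j u) = j := by
  have hblk : ∀ e ∈ anchor t j u, blk t e = j := by
    intro e he
    exact ((mem_anchor t hj).1 he).1
  apply jsel_eq
  · have : fib t (anchor t j u) j = anchor t j u := by
      unfold fib
      exact filter_eq_self.2 (fun e he => hblk e he)
    rw [this, anchor_card t hj hu]
    omega
  · intro j' hj'
    have : fib t (anchor t j u) j' = ∅ := by
      unfold fib
      apply filter_eq_empty_iff.2
      intro e he
      rw [hblk e he]
      omega
    rw [this]
    simp

lemma emk_ne {j p p' : ℕ} (hj : j < t+2) (hp : p < m t) (hp' : p' < m t) (hne : p ≠ p') :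
    emk t j p ≠ emk t j p' := fun h => hne (emk_inj t hj hp hj hp' h).2

lemma qq_lt_m : qq t + 2 < m t := by unfold qq m; omega

lemma nonstar (j s : ℕ) (hj : j < t+2) (hs : s < 2*t+2) (x : Fin (N t)) :
    ∃ A : Finset (Fin (N t)), A.card = t+3 ∧ x ∉ A ∧ jsel t A = j ∧ sel2 t A = s := by
  have hqm := qq_lt_m t
  rcases Nat.lt_or_ge s (qq t) with hsq | hsq
  · -- star class at center s
    by_cases hx : x = emk t j s
    · -- use the anchor
      refine ⟨anchor t j s, anchor_card t hj hsq, ?_, jsel_anchor t hj hsq, ?_⟩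
      · intro hmem
        rw [hx, mem_anchor t hj, pos_emk t hj (by omega)] at hmem
        exact not_self_Wfin t hsq hmem.2
      · have hanch : isAnchor t (anchor t j s) := ⟨s, hsq, by rw [jsel_anchor t hj hsq]⟩
        obtain ⟨hlt, heq⟩ := sel2_anchor t hanch
        rw [jsel_anchor t hj hsq] at heq
        exact (anchor_inj t hj hlt hsq heq.symm)
    · -- use a witness pair {s, w} with w among top positions
      set w : ℕ := if x = emk t j (qq t) then qq t + 1 else qq t with hw
      have hww : w = qq t + 1 ∨ w = qq t := by rw [hw]; split <;> simp
      have hxw : x ≠ emk t j w := by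
        rw [hw]; split
        · next h => exact fun h' => (emk_ne t hj (by omega) (by omega)
            (by omega : qq t ≠ qq t + 1)) (h.symm.trans h' ▸ rfl)
        · next h => exact h
      obtain ⟨A, hcard, hxA, hjsel, hp1, hp2, hnoanch⟩ :=
        witness t j s w hj (by omega) (by omega) x hx hxw
      refine ⟨A, hcard, hxA, hjsel, ?_⟩
      rw [sel2_not_anchor t hnoanch]
      unfold esel
      rw [hp1, hp2]
      rw [if_neg (by omega), if_pos (by omega)]
  · -- triangle class
    have hsval : s = qq t := by unfold qq at *; omega
    subst hsval
    have key : ∀ a b : ℕ, qq t ≤ a → a < b → b < m t → x ≠ emk t j a → x ≠ emk t j b →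
        ∃ A : Finset (Fin (N t)), A.card = t+3 ∧ x ∉ A ∧ jsel t A = j ∧ sel2 t A = qq t := by
      intro a b haq hab hbm hxa hxb
      obtain ⟨A, hcard, hxA, hjsel, hp1, hp2, hnoanch⟩ :=
        witness t j a b hj hab hbm x hxa hxb
      refine ⟨A, hcard, hxA, hjsel, ?_⟩
      rw [sel2_not_anchor t hnoanch]
      unfold esel
      rw [hp1]
      rw [if_pos (by omega)]
    by_cases h1 : x = emk t j (qq t)
    · apply key (qq t + 1) (qq t + 2) (by omega) (by omega) (by omega)
      · intro h'
        exact emk_ne t hj (by omega) (by omega) (by omega : qq t ≠ qq t + 1) (h1.symm.trans h')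
      · intro h'
        exact emk_ne t hj (by omega) (by omega) (by omega : qq t ≠ qq t + 2) (h1.symm.trans h')
    · by_cases h2 : x = emk t j (qq t + 1)
      · apply key (qq t) (qq t + 2) (by omega) (by omega) (by omega) h1
        intro h'
        exact emk_ne t hj (by omega) (by omega) (by omega : qq t + 1 ≠ qq t + 2) (h2.symm.trans h')
      · exact key (qq t) (qq t + 1) (by omega) (by omega) (by omega) h1 h2

lemma main :
    ∃ F : Fin (C t) → Finset (Finset (Fin (N t))),
      (∀ i, ∀ A ∈ F i, ∀ B ∈ F i, (A ∩ B).Nonempty) ∧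
      (∀ i, ¬ ∃ x : Fin (N t), ∀ A ∈ F i, x ∈ A) ∧
      (∀ i j, i ≠ j → Disjoint (F i) (F j)) ∧
      Finset.univ.biUnion F = Finset.powersetCard (t+3) Finset.univ := by
  classical
  refine ⟨fun i => (powersetCard (t+3) (univ : Finset (Fin (N t)))).filter
      (fun A => colorFn t A = i), ?_, ?_, ?_, ?_⟩
  · intro i A hA B hB
    rw [mem_filter, mem_powersetCard] at hA hB
    have h := colorFn_eq t (hA.2.trans hB.2.symm)
    exact intersecting t hA.1.2 hB.1.2 h.1 h.2
  · rintro i ⟨x, hx⟩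
    obtain ⟨j, s, hj, hs, hi⟩ := encode_surj t i
    obtain ⟨A, hcard, hxA, hjsel, hsel2⟩ := nonstar t j s hj hs x
    have hAF : A ∈ (powersetCard (t+3) (univ : Finset (Fin (N t)))).filter
        (fun A => colorFn t A = i) := by
      rw [mem_filter, mem_powersetCard]
      refine ⟨⟨fun _ _ => mem_univ _, hcard⟩, ?_⟩
      rw [hi]
      apply Fin.ext
      unfold colorFn encode
      simp only
      rw [hjsel, hsel2]
    exact hxA (hx A hAF)
  · intro i j hne
    rw [Finset.disjoint_left]
    intro A hAi hAj
    rw [mem_filter] at hAi hAj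
    exact hne (hAi.2 ▸ hAj.2)
  · ext A
    simp only [mem_biUnion, mem_univ, true_and, mem_filter]
    constructor
    · rintro ⟨i, hi⟩
      exact hi.1
    · intro hA
      exact ⟨colorFn t A, hA, rfl⟩

end NK

/-- For `k ≥ 3` and `n = 2(k-1)²`, the family of all `k`-subsets of `[n]` can be
partitioned into `n - 2k + 2 = 2(k-1)(k-2)` pairwise disjoint intersecting families,
none of which is trivial. -/
theorem exists_nontrivial_intersecting_partition (k : ℕ) (hk : 3 ≤ k) :
    2 * (k - 1) ^ 2 - 2 * k + 2 = 2 * (k - 1) * (k - 2) ∧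
    ∃ F : Fin (2 * (k - 1) ^ 2 - 2 * k + 2) → Finset (Finset (Fin (2 * (k - 1) ^ 2))),
      (∀ i, ∀ A ∈ F i, ∀ B ∈ F i, (A ∩ B).Nonempty) ∧
      (∀ i, ¬ ∃ x : Fin (2 * (k - 1) ^ 2), ∀ A ∈ F i, x ∈ A) ∧
      (∀ i j, i ≠ j → Disjoint (F i) (F j)) ∧
      Finset.univ.biUnion F = Finset.powersetCard k Finset.univ := by
  obtain ⟨t, rfl⟩ : ∃ t, k = t + 3 := ⟨k - 3, by omega⟩
  have hsq : (t+2)^2 = t*t + 4*t + 4 := by ring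
  have hrhs : 2*(t+2)*(t+1) = 2*(t*t) + 6*t + 4 := by ring
  have h1 : t + 3 - 1 = t + 2 := rfl
  have h2 : t + 3 - 2 = t + 1 := rfl
  constructor
  · rw [h1, h2]
    omega
  · have hC : 2 * (t + 3 - 1) ^ 2 - 2 * (t + 3) + 2 = NK.C t := by
      rw [h1]
      unfold NK.C
      omega
    have hN : 2 * (t + 3 - 1) ^ 2 = NK.N t := by
      rw [h1]
      unfold NK.N
      rfl
    rw [hC, hN]
    exact NK.main t
end

section
/- Let H be a family of subsets of [n], each member having size at least 2, such that H has no independent set of size b (i.e., every b-element subset of [n] contains some member of H). Let H^{(i)} denote the set of members of H of size exactly i. Then for every real p with 0 < p < 1, one has ∑_{i=2}^{n} |H^{(i)}| · p^i > n·p − b. -/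
lemma spencer_aux (n : ℕ) (p : ℝ) (A : Finset (Fin n)) :
    ∑ R ∈ Finset.univ.filter (fun R => A ⊆ R),
        p ^ R.card * (1 - p) ^ (n - R.card) = p ^ A.card := by
  have h1 : ∑ R ∈ Finset.univ.filter (fun R => A ⊆ R),
      p ^ R.card * (1 - p) ^ (n - R.card)
      = ∑ S ∈ Aᶜ.powerset, p ^ (S ∪ A).card * (1 - p) ^ (n - (S ∪ A).card) := by
    apply Finset.sum_nbij' (fun R => R \ A) (fun S => S ∪ A)
    · intro R hR
      simp only [Finset.mem_filter] at hR
      rw [Finset.mem_powerset]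
      intro x hx
      simp only [Finset.mem_sdiff] at hx
      simp [Finset.mem_compl, hx.2]
    · intro S hS
      simp [Finset.mem_filter]
    · intro R hR
      simp only [Finset.mem_filter] at hR
      exact Finset.sdiff_union_of_subset hR.2
    · intro S hS
      simp only [Finset.mem_powerset] at hS
      rw [Finset.union_sdiff_right]
      exact Finset.sdiff_eq_self_of_disjoint (Finset.disjoint_left.mpr fun x hx => by
        have := hS hx; simp [Finset.mem_compl] at this; exact this)
    · intro R hR
      simp only [Finset.mem_filter] at hR
      rw [Finset.sdiff_union_of_subset hR.2]
  rw [h1]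
  have hdisj : ∀ S ∈ Aᶜ.powerset, Disjoint S A := by
    intro S hS
    simp only [Finset.mem_powerset] at hS
    exact Finset.disjoint_left.mpr fun x hx => by
      have := hS hx; simpa [Finset.mem_compl] using this
  have h2 : ∀ S ∈ Aᶜ.powerset, p ^ (S ∪ A).card * (1 - p) ^ (n - (S ∪ A).card)
      = p ^ A.card * (p ^ S.card * (1 - p) ^ ((Aᶜ \ S).card)) := by
    intro S hS
    have hd := hdisj S hS
    have hc : (S ∪ A).card = S.card + A.card := Finset.card_union_of_disjoint hd
    have hSc : S ⊆ Aᶜ := Finset.mem_powerset.mp hS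
    have hAc : Aᶜ.card = n - A.card := by
      rw [Finset.card_compl]; simp
    have h3 : (Aᶜ \ S).card = Aᶜ.card - S.card := Finset.card_sdiff_of_subset hSc
    have hAn : A.card ≤ n := by
      simpa using Finset.card_le_card (Finset.subset_univ A)
    have hSn : S.card ≤ Aᶜ.card := Finset.card_le_card hSc
    have : n - (S ∪ A).card = Aᶜ.card - S.card := by
      rw [hc, hAc]; omega
    rw [hc] at this ⊢
    rw [this, h3, pow_add]
    ring
  rw [Finset.sum_congr rfl h2, ← Finset.mul_sum]
  have h4 : ∑ S ∈ Aᶜ.powerset, p ^ S.card * (1 - p) ^ (Aᶜ \ S).card = 1 := by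
    have := Finset.prod_add (fun _ : Fin n => p) (fun _ => 1 - p) Aᶜ
    simp only [Finset.prod_const] at this
    rw [← this]
    simp
  rw [h4, mul_one]

-- deletion lemma
lemma spencer_del (n b : ℕ) (H : Finset (Finset (Fin n)))
    (hcard : ∀ A ∈ H, 2 ≤ A.card)
    (hindep : ∀ I : Finset (Fin n), I.card = b → ∃ A ∈ H, A ⊆ I)
    (R : Finset (Fin n)) :
    R.card < (H.filter (fun A => A ⊆ R)).card + b := by
  classical
  set T := H.filter (fun A => A ⊆ R) with hT
  set e : Finset (Fin n) → Finset (Fin n) :=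
    fun A => if h : A.Nonempty then {h.choose} else ∅ with he
  set D := T.biUnion e with hD
  have hDcard : D.card ≤ T.card := by
    calc D.card ≤ ∑ A ∈ T, (e A).card := Finset.card_biUnion_le
    _ ≤ ∑ A ∈ T, 1 := Finset.sum_le_sum (fun A _ => by
        by_cases h : A.Nonempty <;> simp [he, h])
    _ = T.card := by simp
  set I := R \ D with hI
  have hne : ∀ A ∈ T, A.Nonempty := by
    intro A hA
    simp only [hT, Finset.mem_filter] at hA
    have := hcard A hA.1
    exact Finset.card_pos.mp (by omega)
  have hindepI : ¬ ∃ A ∈ H, A ⊆ I := by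
    rintro ⟨A, hAH, hAI⟩
    have hAT : A ∈ T := by
      simp only [hT, Finset.mem_filter]
      exact ⟨hAH, hAI.trans (Finset.sdiff_subset)⟩
    have hne' := hne A hAT
    have hx : hne'.choose ∈ D := by
      rw [hD]
      exact Finset.mem_biUnion.mpr ⟨A, hAT, by simp [he, hne']⟩
    have hxI : hne'.choose ∈ I := hAI hne'.choose_spec
    rw [hI, Finset.mem_sdiff] at hxI
    exact hxI.2 hx
  have hIb : I.card < b := by
    by_contra hcon
    push_neg at hcon
    obtain ⟨I', hI'sub, hI'card⟩ := Finset.exists_subset_card_eq hcon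
    obtain ⟨A, hAH, hAI'⟩ := hindep I' hI'card
    exact hindepI ⟨A, hAH, hAI'.trans hI'sub⟩
  have : R.card ≤ I.card + D.card := by
    rw [hI]
    have h1 := Finset.card_sdiff_add_card_inter R D
    have h2 : (R ∩ D).card ≤ D.card := Finset.card_le_card Finset.inter_subset_right
    omega
  omega

/-- Spencer's bound: if `H` is a family of subsets of `[n]`, each of size at least `2`,
with no independent set of size `b` (every `b`-subset of `[n]` contains a member of `H`),
then for all `0 < p < 1` we have `∑_{i=2}^n |H^{(i)}| p^i > n p - b`. -/
theorem spencer_bound (n b : ℕ) (H : Finset (Finset (Fin n)))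
    (hcard : ∀ A ∈ H, 2 ≤ A.card)
    (hindep : ∀ I : Finset (Fin n), I.card = b → ∃ A ∈ H, A ⊆ I)
    (p : ℝ) (hp0 : 0 < p) (hp1 : p < 1) :
    ∑ i ∈ Finset.Icc 2 n, ((H.filter (fun A => A.card = i)).card : ℝ) * p ^ i
      > (n : ℝ) * p - (b : ℝ) := by
  classical
  set w : Finset (Fin n) → ℝ := fun R => p ^ R.card * (1 - p) ^ (n - R.card) with hw
  have hwpos : ∀ R, 0 ≤ w R := fun R =>
    mul_nonneg (pow_nonneg hp0.le _) (pow_nonneg (by linarith) _)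
  -- total weight is 1
  have hw1 : ∑ R : Finset (Fin n), w R = 1 := by
    have := spencer_aux n p ∅
    simpa using this
  -- expected size is n p
  have hA : ∑ R : Finset (Fin n), w R * (R.card : ℝ) = (n : ℝ) * p := by
    have hcardeq : ∀ R : Finset (Fin n), (R.card : ℝ)
        = ∑ x : Fin n, if x ∈ R then (1 : ℝ) else 0 := by
      intro R
      rw [Finset.sum_ite_mem]
      simp [Finset.univ_inter]
    calc ∑ R : Finset (Fin n), w R * (R.card : ℝ)
        = ∑ R : Finset (Fin n), ∑ x : Fin n, (if x ∈ R then w R else 0) := by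
          apply Finset.sum_congr rfl
          intro R _
          rw [hcardeq R, Finset.mul_sum]
          apply Finset.sum_congr rfl
          intro x _
          by_cases h : x ∈ R <;> simp [h]
      _ = ∑ x : Fin n, ∑ R : Finset (Fin n), (if x ∈ R then w R else 0) :=
          Finset.sum_comm
      _ = ∑ x : Fin n, p := by
          apply Finset.sum_congr rfl
          intro x _
          rw [Finset.sum_ite, Finset.sum_const_zero, add_zero]
          have := spencer_aux n p {x}
          simp only [Finset.singleton_subset_iff, Finset.card_singleton, pow_one] at this
          exact this
      _ = (n : ℝ) * p := by simp [mul_comm]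
  -- expected number of contained members
  have hB : ∑ R : Finset (Fin n), w R * ((H.filter (fun A => A ⊆ R)).card : ℝ)
      = ∑ A ∈ H, p ^ A.card := by
    calc ∑ R : Finset (Fin n), w R * ((H.filter (fun A => A ⊆ R)).card : ℝ)
        = ∑ R : Finset (Fin n), ∑ A ∈ H, (if A ⊆ R then w R else 0) := by
          apply Finset.sum_congr rfl
          intro R _
          rw [Finset.card_filter]
          push_cast
          rw [Finset.mul_sum]
          apply Finset.sum_congr rfl
          intro A _
          by_cases h : A ⊆ R <;> simp [h]
      _ = ∑ A ∈ H, ∑ R : Finset (Fin n), (if A ⊆ R then w R else 0) :=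
          Finset.sum_comm
      _ = ∑ A ∈ H, p ^ A.card := by
          apply Finset.sum_congr rfl
          intro A _
          rw [Finset.sum_ite, Finset.sum_const_zero, add_zero]
          exact spencer_aux n p A
  -- group by cardinality
  have hC : ∑ A ∈ H, p ^ A.card
      = ∑ i ∈ Finset.Icc 2 n, ((H.filter (fun A => A.card = i)).card : ℝ) * p ^ i := by
    rw [← Finset.sum_fiberwise_of_maps_to (g := fun A => A.card) (t := Finset.Icc 2 n)
      (fun A hA => Finset.mem_Icc.mpr ⟨hcard A hA, by
        simpa using Finset.card_le_card (Finset.subset_univ A)⟩)]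
    apply Finset.sum_congr rfl
    intro i _
    rw [Finset.sum_congr rfl (fun A hA => by
      rw [(Finset.mem_filter.mp hA).2])]
    rw [Finset.sum_const, nsmul_eq_mul]
  -- main chain
  have key : (n : ℝ) * p ≤ (∑ A ∈ H, p ^ A.card) + (b : ℝ) - 1 := by
    rw [← hA, ← hB]
    have hpt : ∀ R : Finset (Fin n), w R * (R.card : ℝ)
        ≤ w R * ((H.filter (fun A => A ⊆ R)).card : ℝ) + w R * ((b : ℝ) - 1) := by
      intro R
      rw [← mul_add]
      apply mul_le_mul_of_nonneg_left _ (hwpos R)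
      have := spencer_del n b H hcard hindep R
      have : (R.card : ℝ) + 1 ≤ ((H.filter (fun A => A ⊆ R)).card : ℝ) + b := by
        exact_mod_cast this
      linarith
    calc ∑ R : Finset (Fin n), w R * (R.card : ℝ)
        ≤ ∑ R : Finset (Fin n), (w R * ((H.filter (fun A => A ⊆ R)).card : ℝ)
            + w R * ((b : ℝ) - 1)) := Finset.sum_le_sum (fun R _ => hpt R)
      _ = (∑ R : Finset (Fin n), w R * ((H.filter (fun A => A ⊆ R)).card : ℝ))
            + (∑ R : Finset (Fin n), w R) * ((b : ℝ) - 1) := by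
          rw [Finset.sum_add_distrib, Finset.sum_mul]
      _ = (∑ R : Finset (Fin n), w R * ((H.filter (fun A => A ⊆ R)).card : ℝ))
            + (b : ℝ) - 1 := by rw [hw1]; ring
  rw [← hC]
  linarith
end

section
/- Let G be a finite simple graph on n ≥ 1 vertices, let γ = |E(G)| / n² (where |E(G)| is the number of edges), and let N_s(G) denote the number of s-element cliques of G. Let r be an integer with 2 ≤ r ≤ n. If γ ≥ (r−2) / (2(r−1)), then N_r(G) ≥ ((2(r−1)γ − (r−2)) / r) · n · N_{r−1}(G), and moreover N_{r−1}(G) > 0. -/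
/-!
Write `d(t)` for the number of common neighbours of a clique `t`, `N_k` for the number of
`k`-cliques and `n` for the number of vertices. Counting pairs (clique, vertex) gives
`∑_{|t| = k} d(t) = (k+1) N_{k+1}` and `∑_{|t| = k} d(t)² ≤ k(k+2) N_{k+2} + n N_{k+1}`, so
Cauchy–Schwarz yields the Moon–Moser inequality
`((k+1) N_{k+1})² ≤ N_k (k(k+2) N_{k+2} + n N_{k+1})`. Feeding
`(k+1) N_{k+1} ≥ (2kγ - (k-1)) n N_k` into it gives the same bound one level up, starting from
`N_1 = n` and `N_2 = γ n²`. Below the top level the density hypothesis makes the factors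
`2kγ - (k-1)` strictly positive, which keeps the `N_k` positive.
-/

open Finset

lemma Sym2.toFinset_injective {α : Type*} [DecidableEq α] :
    Function.Injective (Sym2.toFinset : Sym2 α → Finset α) := fun z z' h =>
  Sym2.ext fun x => by rw [← Sym2.mem_toFinset, h, Sym2.mem_toFinset]

namespace SimpleGraph

variable {V : Type*} [Fintype V] (G : SimpleGraph V) [DecidableRel G.Adj]

def commonNeighborFinset (s : Finset V) : Finset V := {u | ∀ v ∈ s, G.Adj u v}

variable {G}

@[simp]
lemma mem_commonNeighborFinset {s : Finset V} {u : V} :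
    u ∈ G.commonNeighborFinset s ↔ ∀ v ∈ s, G.Adj u v := by
  simp [commonNeighborFinset]

lemma notMem_of_mem_commonNeighborFinset {s : Finset V} {u : V}
    (h : u ∈ G.commonNeighborFinset s) : u ∉ s :=
  fun hu => G.irrefl (mem_commonNeighborFinset.1 h u hu)

variable [DecidableEq V]

lemma IsClique.mem_commonNeighborFinset_erase {s : Finset V} (hs : G.IsClique (s : Set V))
    {v : V} (hv : v ∈ s) : v ∈ G.commonNeighborFinset (s.erase v) := by
  simp only [mem_commonNeighborFinset, mem_erase]
  exact fun w ⟨hwv, hw⟩ => hs hv hw hwv.symm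

/-- `(s, v) ↦ (s.erase v, v)` matches pairs (`(k+1)`-clique, vertex of it) with pairs
(`k`-clique, common neighbour of it). -/
lemma sum_sum_erase_cliqueFinset_succ {M : Type*} [AddCommMonoid M] (k : ℕ)
    (f : Finset V → M) :
    ∑ s ∈ G.cliqueFinset (k + 1), ∑ v ∈ s, f (s.erase v)
      = ∑ t ∈ G.cliqueFinset k, #(G.commonNeighborFinset t) • f t := by
  simp_rw [← sum_const, sum_sigma']
  refine sum_nbij' (fun p => ⟨p.1.erase p.2, p.2⟩) (fun p => ⟨insert p.2 p.1, p.2⟩)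
    ?_ ?_ ?_ ?_ fun _ _ => rfl
  · rintro ⟨s, v⟩ h
    simp only [mem_sigma, mem_cliqueFinset_iff] at h ⊢
    exact ⟨h.1.erase_of_mem h.2, h.1.isClique.mem_commonNeighborFinset_erase h.2⟩
  · rintro ⟨t, u⟩ h
    simp only [mem_sigma, mem_cliqueFinset_iff] at h ⊢
    exact ⟨h.1.insert (mem_commonNeighborFinset.1 h.2), mem_insert_self _ _⟩
  · rintro ⟨s, v⟩ h
    rw [mem_sigma] at h
    simp [insert_erase h.2]
  · rintro ⟨t, u⟩ h
    rw [mem_sigma] at h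
    simp [erase_insert (notMem_of_mem_commonNeighborFinset h.2)]

lemma sum_card_commonNeighborFinset (k : ℕ) :
    ∑ t ∈ G.cliqueFinset k, #(G.commonNeighborFinset t)
      = (k + 1) * #(G.cliqueFinset (k + 1)) := by
  have h := sum_sum_erase_cliqueFinset_succ (G := G) k fun _ => 1
  simp only [smul_eq_mul, mul_one] at h
  rw [← h, ← sum_congr rfl fun s _ => card_eq_sum_ones s,
    sum_const_nat fun s hs => (mem_cliqueFinset_iff.1 hs).card_eq, mul_comm]

lemma card_filter_mem_commonNeighborFinset_erase_le_one {s : Finset V} {u : V}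
    (hu : u ∉ G.commonNeighborFinset s) :
    #{v ∈ s | u ∈ G.commonNeighborFinset (s.erase v)} ≤ 1 := by
  refine card_le_one.2 fun v₁ h₁ v₂ h₂ => by_contra fun hne => hu ?_
  simp only [mem_filter, mem_commonNeighborFinset, mem_erase] at h₁ h₂
  refine mem_commonNeighborFinset.2 fun w hw => ?_
  obtain rfl | hw₁ := eq_or_ne w v₁
  · exact h₂.2 w ⟨hne, hw⟩
  · exact h₁.2 w ⟨hw₁, hw⟩

/-- A vertex of `commonNeighborFinset s` is counted `#s` times on the left, any other vertex at
most once. -/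
lemma sum_card_commonNeighborFinset_erase_le (s : Finset V) :
    ∑ v ∈ s, #(G.commonNeighborFinset (s.erase v)) + #(G.commonNeighborFinset s)
      ≤ #s * #(G.commonNeighborFinset s) + Fintype.card V := by
  calc ∑ v ∈ s, #(G.commonNeighborFinset (s.erase v)) + #(G.commonNeighborFinset s)
      = ∑ u, (#{v ∈ s | u ∈ G.commonNeighborFinset (s.erase v)}
          + if u ∈ G.commonNeighborFinset s then 1 else 0) := by
        have h := sum_card_bipartiteAbove_eq_sum_card_bipartiteBelow (s := s) (t := univ)
          (r := fun v u => u ∈ G.commonNeighborFinset (s.erase v))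
        simp only [bipartiteAbove, bipartiteBelow, filter_univ_mem] at h
        rw [sum_add_distrib, sum_boole, ← h, filter_univ_mem, Nat.cast_id]
    _ ≤ ∑ u : V, ((if u ∈ G.commonNeighborFinset s then #s else 0) + 1) := by
        refine sum_le_sum fun u _ => ?_
        split_ifs with hu
        · exact Nat.add_le_add_right (card_filter_le _ _) 1
        · simpa using card_filter_mem_commonNeighborFinset_erase_le_one hu
    _ = #s * #(G.commonNeighborFinset s) + Fintype.card V := by
        rw [sum_add_distrib, sum_ite_mem, univ_inter, sum_const, smul_eq_mul, mul_comm]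
        simp

lemma sum_sq_card_commonNeighborFinset_le (k : ℕ) :
    ∑ t ∈ G.cliqueFinset k, #(G.commonNeighborFinset t) ^ 2
      ≤ k * ((k + 2) * #(G.cliqueFinset (k + 2)))
        + Fintype.card V * #(G.cliqueFinset (k + 1)) := by
  have hsum := sum_le_sum fun s (hs : s ∈ G.cliqueFinset (k + 1)) =>
    (mem_cliqueFinset_iff.1 hs).card_eq ▸ sum_card_commonNeighborFinset_erase_le (G := G) s
  rw [sum_add_distrib, sum_sum_erase_cliqueFinset_succ k fun t => #(G.commonNeighborFinset t),
    sum_add_distrib, ← mul_sum, sum_card_commonNeighborFinset, sum_const, smul_eq_mul] at hsum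
  simp only [smul_eq_mul, ← sq] at hsum
  nlinarith

/-- The Moon–Moser inequality. -/
theorem sq_mul_card_cliqueFinset_succ_le (k : ℕ) :
    ((k + 1) * #(G.cliqueFinset (k + 1))) ^ 2
      ≤ #(G.cliqueFinset k)
        * (k * ((k + 2) * #(G.cliqueFinset (k + 2)))
          + Fintype.card V * #(G.cliqueFinset (k + 1))) :=
  calc ((k + 1) * #(G.cliqueFinset (k + 1))) ^ 2
      = (∑ t ∈ G.cliqueFinset k, #(G.commonNeighborFinset t)) ^ 2 := by
        rw [sum_card_commonNeighborFinset]
    _ ≤ #(G.cliqueFinset k) * ∑ t ∈ G.cliqueFinset k, #(G.commonNeighborFinset t) ^ 2 :=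
        sq_sum_le_card_mul_sum_sq
    _ ≤ _ := Nat.mul_le_mul_left _ (sum_sq_card_commonNeighborFinset_le k)

lemma card_cliqueFinset_one : #(G.cliqueFinset 1) = Fintype.card V := by
  have h : G.cliqueFinset 1 = univ.map ⟨({·}), singleton_injective⟩ := by
    ext s
    simp [isNClique_one, eq_comm]
  rw [h, card_map, card_univ]

lemma card_cliqueFinset_two : #(G.cliqueFinset 2) = #G.edgeFinset := by
  have h : G.cliqueFinset 2 = G.edgeFinset.map ⟨Sym2.toFinset, Sym2.toFinset_injective⟩ := by
    ext s
    simp only [mem_cliqueFinset_iff, mem_map, mem_edgeFinset, Function.Embedding.coeFn_mk]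
    constructor
    · intro hs
      obtain ⟨a, b, hab, rfl⟩ := card_eq_two.1 hs.card_eq
      exact ⟨s(a, b), hs.isClique (by simp) (by simp) hab, Sym2.toFinset_mk_eq⟩
    · rintro ⟨e, he, rfl⟩
      induction e using Sym2.ind with
      | _ a b =>
        rw [Sym2.toFinset_mk_eq]
        exact ⟨by simpa [isClique_pair] using fun _ => he, card_pair he.ne⟩
  rw [h, card_map]

theorem card_cliqueFinset_succ_ge [Nonempty V] {k : ℕ} (hk : 1 ≤ k)
    (hγ : (k - 1 : ℝ) ≤ 2 * k * (#G.edgeFinset / Fintype.card V ^ 2 : ℝ)) :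
    (2 * k * (#G.edgeFinset / Fintype.card V ^ 2 : ℝ) - (k - 1)) * Fintype.card V
        * #(G.cliqueFinset k) ≤ (k + 1) * #(G.cliqueFinset (k + 1)) ∧
      0 < #(G.cliqueFinset k) := by
  have hn : (0 : ℝ) < Fintype.card V := by exact_mod_cast Fintype.card_pos
  induction k, hk using Nat.le_induction with
  | base =>
    refine ⟨le_of_eq ?_, by simp [card_cliqueFinset_one, Fintype.card_pos]⟩
    rw [card_cliqueFinset_one, card_cliqueFinset_two]
    field_simp
    ring
  | succ k hk ih =>
    have hMM : (((k : ℝ) + 1) * #(G.cliqueFinset (k + 1))) ^ 2 ≤ #(G.cliqueFinset k)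
        * (k * ((k + 2) * #(G.cliqueFinset (k + 2)))
          + Fintype.card V * #(G.cliqueFinset (k + 1))) := by
      exact_mod_cast sq_mul_card_cliqueFinset_succ_le (G := G) k
    suffices h : _ ∧ (0 : ℝ) < #(G.cliqueFinset (k + 1)) from ⟨h.1, by exact_mod_cast h.2⟩
    generalize (#G.edgeFinset / Fintype.card V ^ 2 : ℝ) = γ at hγ ih
    generalize (Fintype.card V : ℝ) = n at hn ih hMM ⊢
    generalize (#(G.cliqueFinset (k + 2)) : ℝ) = c at hMM ⊢
    push_cast at hγ ⊢
    have hk₀ : (1 : ℝ) ≤ k := by exact_mod_cast hk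
    have htk : 0 < 2 * k * γ - (k - 1) := by nlinarith
    obtain ⟨hIH, hpos⟩ := ih (by linarith)
    have ha : (0 : ℝ) < #(G.cliqueFinset k) := by exact_mod_cast hpos
    generalize (#(G.cliqueFinset k) : ℝ) = a at ha hIH hMM
    generalize (#(G.cliqueFinset (k + 1)) : ℝ) = b at hIH hMM ⊢
    have hb : 0 < b := by
      have : 0 < (2 * k * γ - (k - 1)) * n * a := by positivity
      nlinarith
    -- multiply the bound by `(k + 1) * b`; note `(2kγ - (k-1))(k+1) - 1 = k (2(k+1)γ - k)`
    have h : a * k * ((2 * (k + 1) * γ - k) * n * b) ≤ a * k * ((k + 2) * c) := by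
      nlinarith [mul_le_mul_of_nonneg_right hIH (by positivity : (0 : ℝ) ≤ (k + 1) * b)]
    exact ⟨by linarith [le_of_mul_le_mul_left h (by positivity)], hb⟩

end SimpleGraph

theorem clique_count_bound_general (n : ℕ) (hn : 1 ≤ n) (G : SimpleGraph (Fin n))
    (r : ℕ) (hr2 : 2 ≤ r)
    (hγ : (G.edgeSet.ncard : ℝ) / (n : ℝ) ^ 2 ≥ ((r : ℝ) - 2) / (2 * ((r : ℝ) - 1))) :
    ((G.cliqueSet r).ncard : ℝ) ≥
      ((2 * ((r : ℝ) - 1) * ((G.edgeSet.ncard : ℝ) / (n : ℝ) ^ 2) - ((r : ℝ) - 2)) / r)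
        * (n : ℝ) * ((G.cliqueSet (r - 1)).ncard : ℝ) ∧
    0 < (G.cliqueSet (r - 1)).ncard := by
  classical
  have : Nonempty (Fin n) := ⟨⟨0, hn⟩⟩
  obtain ⟨k, rfl⟩ : ∃ k, r = k + 1 := ⟨r - 1, by omega⟩
  have hk : 1 ≤ k := by omega
  have hk₀ : (0 : ℝ) < k := by exact_mod_cast hk
  simp only [Nat.add_sub_cancel, ← SimpleGraph.coe_cliqueFinset, ← SimpleGraph.coe_edgeFinset,
    Set.ncard_coe_finset] at hγ ⊢
  push_cast at hγ ⊢
  rw [add_sub_cancel_right, show (k : ℝ) + 1 - 2 = k - 1 by ring, ge_iff_le,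
    div_le_iff₀ (by positivity)] at hγ
  obtain ⟨hbound, hpos⟩ := G.card_cliqueFinset_succ_ge hk (by
    rw [Fintype.card_fin]; linarith)
  refine ⟨?_, hpos⟩
  rw [Fintype.card_fin] at hbound
  rw [add_sub_cancel_right, show (k : ℝ) + 1 - 2 = k - 1 by ring, ge_iff_le,
    div_mul_eq_mul_div, div_mul_eq_mul_div, div_le_iff₀ (by positivity)]
  linarith

/-- Khadžiivanov–Nikiforov clique counting: if `γ = |E(G)|/n² ≥ (r-2)/(2(r-1))`, then
`N_r(G) ≥ ((2(r-1)γ - (r-2))/r) · n · N_{r-1}(G)` and `N_{r-1}(G) > 0`. -/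
theorem clique_count_bound (n : ℕ) (hn : 1 ≤ n) (G : SimpleGraph (Fin n))
    (r : ℕ) (hr2 : 2 ≤ r) (hrn : r ≤ n)
    (hγ : (G.edgeSet.ncard : ℝ) / (n : ℝ) ^ 2 ≥ ((r : ℝ) - 2) / (2 * ((r : ℝ) - 1))) :
    ((G.cliqueSet r).ncard : ℝ) ≥
      ((2 * ((r : ℝ) - 1) * ((G.edgeSet.ncard : ℝ) / (n : ℝ) ^ 2) - ((r : ℝ) - 2)) / r)
        * (n : ℝ) * ((G.cliqueSet (r - 1)).ncard : ℝ) ∧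
    0 < (G.cliqueSet (r - 1)).ncard :=
  clique_count_bound_general n hn G r hr2 hγ
end
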